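/- arXiv:1309.3795 — 5 statements merged into one kernel-verified Lean document; each statement's English description precedes it below -/
import Mathlib

section
/- For almost every (x₁,…,x_k) ∈ [0,1)^k (with respect to Lebesgue measure), the following holds: for every open set U ⊆ K containing f(x₁,…,x_k), the limit as m → ∞ of m^k · μ(f⁻¹(U) ∩ ∏_{i=1}^k Δ_m(x_i)) equals 1, where Δ_m(x) denotes the unique dyadic-style interval [s/m,(s+1)/m) containing x. -/
/-!
The closed grid cube of mesh `1/m` containing `x` is the sup-norm closed ball of radius `1/(2m)`
about its center, a ball which also contains `x`, and it differs from the half-open cube by a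
null set. Lebesgue's density theorem for closed balls with moving centers (valid for any uniformly
locally doubling measure) therefore applies along these cubes. A countable basis of `K` reduces
all open `U` to countably many measurable preimages, and density passes from a basic set
`V ⊆ U` to `U` since the normalized measure of a cube is `1`.
-/

open MeasureTheory Filter Set Metric Topology TopologicalSpace

noncomputable def dyadicIval (m : ℕ) (x : ℝ) : Set ℝ :=
  Set.Ico ((⌊(m : ℝ) * x⌋ : ℝ) / m) (((⌊(m : ℝ) * x⌋ : ℝ) + 1) / m)

noncomputable def dyadicCenter (m : ℕ) (x : ℝ) : ℝ :=
  ((⌊(m : ℝ) * x⌋ : ℝ) + 2⁻¹) / m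

lemma closedBall_dyadicCenter (m : ℕ) (x : ℝ) :
    closedBall (dyadicCenter m x) (2 * m)⁻¹ =
      Icc ((⌊(m : ℝ) * x⌋ : ℝ) / m) (((⌊(m : ℝ) * x⌋ : ℝ) + 1) / m) := by
  rw [Real.closedBall_eq_Icc, dyadicCenter]
  congr 1 <;> ring

lemma dyadicIval_subset_closedBall (m : ℕ) (x : ℝ) :
    dyadicIval m x ⊆ closedBall (dyadicCenter m x) (2 * m)⁻¹ := by
  rw [closedBall_dyadicCenter]
  exact Ico_subset_Icc_self

lemma dyadicIval_ae_eq_closedBall (m : ℕ) (x : ℝ) :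
    dyadicIval m x =ᵐ[volume] closedBall (dyadicCenter m x) (2 * m)⁻¹ := by
  rw [closedBall_dyadicCenter]
  exact Ico_ae_eq_Icc

lemma self_mem_dyadicIval {m : ℕ} (hm : 0 < m) (x : ℝ) : x ∈ dyadicIval m x := by
  have hm' : (0 : ℝ) < m := Nat.cast_pos.2 hm
  constructor
  · rw [div_le_iff₀ hm', mul_comm]
    exact Int.floor_le _
  · rw [lt_div_iff₀ hm', mul_comm]
    exact Int.lt_floor_add_one _

lemma volume_dyadicIval {m : ℕ} (hm : 0 < m) (x : ℝ) :
    volume (dyadicIval m x) = (m : ENNReal)⁻¹ := by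
  have hm' : (0 : ℝ) < m := Nat.cast_pos.2 hm
  rw [dyadicIval, Real.volume_Ico, ← ENNReal.ofReal_natCast, ← ENNReal.ofReal_inv_of_pos hm']
  congr 1
  field_simp
  ring

noncomputable def dyadicCube {ι : Type*} (m : ℕ) (x : ι → ℝ) : Set (ι → ℝ) :=
  univ.pi fun i => dyadicIval m (x i)

lemma self_mem_dyadicCube {ι : Type*} {m : ℕ} (hm : 0 < m) (x : ι → ℝ) :
    x ∈ dyadicCube m x :=
  fun i _ => self_mem_dyadicIval hm (x i)

section Cube

variable {ι : Type*} [Fintype ι]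

lemma dyadicCube_subset_closedBall (m : ℕ) (x : ι → ℝ) :
    dyadicCube m x ⊆ closedBall (fun i => dyadicCenter m (x i)) (2 * m)⁻¹ := by
  rw [closedBall_pi _ (by positivity)]
  exact pi_mono fun i _ => dyadicIval_subset_closedBall m (x i)

lemma dyadicCube_ae_eq_closedBall (m : ℕ) (x : ι → ℝ) :
    dyadicCube m x =ᵐ[volume] closedBall (fun i => dyadicCenter m (x i)) (2 * m)⁻¹ := by
  rw [closedBall_pi _ (by positivity), volume_pi]
  exact Measure.ae_eq_set_pi fun i _ => dyadicIval_ae_eq_closedBall m (x i)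

lemma natCast_pow_mul_volume_dyadicCube {m : ℕ} (hm : 0 < m) (x : ι → ℝ) :
    (m : ENNReal) ^ Fintype.card ι * volume (dyadicCube m x) = 1 := by
  have hm' : (m : ENNReal) ≠ 0 := by exact_mod_cast hm.ne'
  rw [dyadicCube, volume_pi_pi]
  simp only [volume_dyadicIval hm, Finset.prod_const, Finset.card_univ, ← mul_pow,
    ENNReal.mul_inv_cancel hm' (ENNReal.natCast_ne_top m), one_pow]

noncomputable def dyadicDensity (s : Set (ι → ℝ)) (x : ι → ℝ) : ℕ → ENNReal :=
  fun m => (m : ENNReal) ^ Fintype.card ι * volume (s ∩ dyadicCube m x)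

lemma dyadicDensity_le_one {m : ℕ} (hm : 0 < m) (s : Set (ι → ℝ)) (x : ι → ℝ) :
    dyadicDensity s x m ≤ 1 :=
  calc dyadicDensity s x m ≤ (m : ENNReal) ^ Fintype.card ι * volume (dyadicCube m x) := by
        unfold dyadicDensity
        gcongr
        exact inter_subset_right
    _ = 1 := natCast_pow_mul_volume_dyadicCube hm x

lemma dyadicDensity_mono {s t : Set (ι → ℝ)} (hst : s ⊆ t) (x : ι → ℝ) (m : ℕ) :
    dyadicDensity s x m ≤ dyadicDensity t x m := by
  unfold dyadicDensity
  gcongr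

theorem ae_tendsto_dyadicDensity {s : Set (ι → ℝ)} (hs : MeasurableSet s) :
    ∀ᵐ x, x ∈ s → Tendsto (dyadicDensity s x) atTop (𝓝 1) := by
  have hdens := IsUnifLocDoublingMeasure.ae_tendsto_measure_inter_div volume s 1
  rw [ae_restrict_iff' hs] at hdens
  filter_upwards [hdens] with x hx hxs
  have hradius : Tendsto (fun m : ℕ => (2 * (m : ℝ))⁻¹) atTop (𝓝[>] 0) := by
    refine tendsto_nhdsWithin_iff.2 ⟨?_, ?_⟩
    · exact tendsto_inv_atTop_zero.comp
        (tendsto_natCast_atTop_atTop.const_mul_atTop two_pos)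
    · filter_upwards [eventually_gt_atTop (0 : ℕ)] with m hm
      show (0 : ℝ) < (2 * (m : ℝ))⁻¹
      positivity
  have hmem : ∀ᶠ m : ℕ in atTop,
      x ∈ closedBall (fun i => dyadicCenter m (x i)) (1 * (2 * (m : ℝ))⁻¹) := by
    filter_upwards [eventually_gt_atTop 0] with m hm
    rw [one_mul]
    exact dyadicCube_subset_closedBall m x (self_mem_dyadicCube hm x)
  refine (hx hxs (fun m i => dyadicCenter m (x i)) (fun m : ℕ => (2 * (m : ℝ))⁻¹)
    hradius hmem).congr' ?_
  filter_upwards [eventually_gt_atTop 0] with m hm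
  have hcube := dyadicCube_ae_eq_closedBall m x
  have hvol : volume (dyadicCube m x) = ((m : ENNReal) ^ Fintype.card ι)⁻¹ :=
    ENNReal.eq_inv_of_mul_eq_one_left
      (by rw [mul_comm]; exact natCast_pow_mul_volume_dyadicCube hm x)
  rw [dyadicDensity, ← measure_congr hcube, ← measure_congr ((ae_eq_refl s).inter hcube), hvol,
    ENNReal.div_eq_inv_mul, inv_inv]

lemma tendsto_dyadicDensity_of_subset {s t : Set (ι → ℝ)} (hst : s ⊆ t) {x : ι → ℝ}
    (hs : Tendsto (dyadicDensity s x) atTop (𝓝 1)) :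
    Tendsto (dyadicDensity t x) atTop (𝓝 1) :=
  tendsto_of_tendsto_of_tendsto_of_le_of_le' hs tendsto_const_nhds
    (Eventually.of_forall (dyadicDensity_mono hst x))
    ((eventually_gt_atTop 0).mono fun _ hm => dyadicDensity_le_one hm t x)

theorem ae_forall_isOpen_tendsto_dyadicDensity_preimage {Y : Type*} [TopologicalSpace Y]
    [SecondCountableTopology Y] [MeasurableSpace Y] [OpensMeasurableSpace Y]
    {f : (ι → ℝ) → Y} (hf : Measurable f) :
    ∀ᵐ x, ∀ U : Set Y, IsOpen U → f x ∈ U →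
      Tendsto (dyadicDensity (f ⁻¹' U) x) atTop (𝓝 1) := by
  have hbasis : ∀ᵐ x, ∀ V ∈ countableBasis Y, f x ∈ V →
      Tendsto (dyadicDensity (f ⁻¹' V) x) atTop (𝓝 1) :=
    (ae_ball_iff (countable_countableBasis Y)).2 fun V hV =>
      ae_tendsto_dyadicDensity (hf (isOpen_of_mem_countableBasis hV).measurableSet)
  filter_upwards [hbasis] with x hx U hU hxU
  obtain ⟨V, hV, hxV, hVU⟩ := (isBasis_countableBasis Y).exists_subset_of_mem_open hxU hU
  exact tendsto_dyadicDensity_of_subset (preimage_mono hVU) (hx V hV hxV)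

end Cube

theorem stmt0_general {K : Type*} [MetricSpace K] [CompactSpace K]
    [MeasurableSpace K] [BorelSpace K]
    (k : ℕ) (f : (Fin k → ℝ) → K) (hf : Measurable f) :
    ∀ᵐ x ∂(Measure.pi fun _ : Fin k => volume.restrict (Set.Ico (0:ℝ) 1)),
      ∀ U : Set K, IsOpen U → f x ∈ U →
        Tendsto
          (fun m : ℕ =>
            (m : ENNReal) ^ k *
              volume (f ⁻¹' U ∩ Set.univ.pi fun i => dyadicIval m (x i)))
          atTop (nhds 1) := by
  rw [← Measure.restrict_pi_pi, ← volume_pi]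
  filter_upwards [ae_restrict_of_ae (ae_forall_isOpen_tendsto_dyadicDensity_preimage hf)]
    with x hx U hU hxU
  have hdensity := hx U hU hxU
  unfold dyadicDensity at hdensity
  rwa [Fintype.card_fin] at hdensity

/-- Topology-valued, multidimensional Lebesgue density theorem: for a.e.
`(x₁,…,x_k) ∈ [0,1)^k`, for every open `U ∋ f(x)`,
`m^k · μ(f⁻¹(U) ∩ ∏ Δ_m(xᵢ)) → 1`. -/
theorem stmt0 {K : Type*} [MetricSpace K] [CompactSpace K]
    [MeasurableSpace K] [BorelSpace K]
    (k : ℕ) (hk : 0 < k) (f : (Fin k → ℝ) → K) (hf : Measurable f) :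
    ∀ᵐ x ∂(Measure.pi fun _ : Fin k => volume.restrict (Set.Ico (0:ℝ) 1)),
      ∀ U : Set K, IsOpen U → f x ∈ U →
        Tendsto
          (fun m : ℕ =>
            (m : ENNReal) ^ k *
              volume (f ⁻¹' U ∩ Set.univ.pi fun i => dyadicIval m (x i)))
          atTop (nhds 1) :=
  stmt0_general k f hf
end

section
/- Given c < ∞ colors, positive integers k₁,…,k_ν and N₁,…,N_ν, there exist positive integers R₁,…,R_ν such that for any pairwise disjoint finite sets A₁,…,A_ν with |A_i| = R_i, and any coloring with c colors of all tuples (B₁,…,B_ν) with B_i ⊆ A_i and |B_i| = k_i, there exist sets C_i ⊆ A_i with |C_i| = N_i such that all tuples (B₁,…,B_ν) with B_i ⊆ C_i receive the same color. -/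
/-!
One part (Erdős–Rado), by induction on `k`: repeatedly keeping the least element `a` and passing
to a homogeneous subset for the link colouring `B ↦ f (insert a B)` yields a set on which the
colour of a `(k + 1)`-set depends only on its least element; pigeonhole on these colours then
gives a homogeneous set.

Several parts, by induction on their number: colour each `k₀`-subset `B₀` of the first part by
the entire colouring `t ↦ color (B₀, t)` of tuples inside fixed subsets of the other parts (finitely
many colours), take a homogeneous `C₀` for it, and apply the induction hypothesis to the common
colouring of tails.
-/

open Finset

namespace Ramsey

variable {α κ : Type*}

def IsHomogeneous (f : Finset α → κ) (k : ℕ) (C : Finset α) : Prop :=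
  ∃ x, ∀ B ⊆ C, #B = k → f B = x

theorem IsHomogeneous.mono {f : Finset α → κ} {k : ℕ} {C D : Finset α}
    (hC : IsHomogeneous f k C) (hDC : D ⊆ C) : IsHomogeneous f k D :=
  hC.imp fun _ hx B hB ↦ hx B (hB.trans hDC)

theorem exists_isHomogeneous_zero (f : Finset α → κ) {A : Finset α} {N : ℕ} (hA : N ≤ #A) :
    ∃ C ⊆ A, #C = N ∧ IsHomogeneous f 0 C := by
  obtain ⟨C, hCA, hC⟩ := exists_subset_card_eq hA
  exact ⟨C, hCA, hC, f ∅, fun B _ hB ↦ by rw [card_eq_zero.1 hB]⟩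

section LinearOrder

variable [LinearOrder α]

def IsEndHomogeneous (f : Finset α → κ) (k : ℕ) (D : Finset α) : Prop :=
  ∀ a ∈ D, IsHomogeneous (fun B ↦ f (insert a B)) k {b ∈ D | a < b}

theorem IsEndHomogeneous.insert {f : Finset α → κ} {k : ℕ} {D : Finset α} {a : α}
    (hD : IsEndHomogeneous f k D) (haD : ∀ b ∈ D, a < b)
    (ha : IsHomogeneous (fun B ↦ f (insert a B)) k D) :
    IsEndHomogeneous f k (insert a D) := by
  intro b hb
  rcases mem_insert.1 hb with rfl | hbD
  · refine ha.mono fun x hx ↦ ?_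
    obtain ⟨hx, hbx⟩ := mem_filter.1 hx
    exact (mem_insert.1 hx).resolve_left hbx.ne'
  · refine (hD b hbD).mono fun x hx ↦ ?_
    obtain ⟨hx, hbx⟩ := mem_filter.1 hx
    refine mem_filter.2 ⟨(mem_insert.1 hx).resolve_left ?_, hbx⟩
    rintro rfl
    exact (haD b hbD).not_gt hbx

theorem exists_isEndHomogeneous {R : ℕ → ℕ} {k : ℕ}
    (hR : ∀ (n : ℕ) (S : Finset α) (g : Finset α → κ), R n ≤ #S →
      ∃ C ⊆ S, #C = n ∧ IsHomogeneous g k C)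
    (f : Finset α → κ) (j : ℕ) (S : Finset α) (hS : (fun n ↦ R n + 1)^[j] 0 ≤ #S) :
    ∃ D ⊆ S, #D = j ∧ IsEndHomogeneous f k D := by
  induction j generalizing S with
  | zero => exact ⟨∅, empty_subset _, card_empty, by simp [IsEndHomogeneous]⟩
  | succ j ih =>
    rw [Function.iterate_succ_apply'] at hS
    have hSne : S.Nonempty := card_pos.1 (by omega)
    set a := S.min' hSne
    have haS : a ∈ S := S.min'_mem hSne
    obtain ⟨C, hCS, hC, hCa⟩ := hR ((fun n ↦ R n + 1)^[j] 0) (S.erase a) (fun B ↦ f (insert a B))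
      (by rw [card_erase_of_mem haS]; omega)
    obtain ⟨D, hDC, hD, hDend⟩ := ih C hC.ge
    have haD : ∀ b ∈ D, a < b := fun b hb ↦ S.min'_lt_of_mem_erase_min' hSne (hCS (hDC hb))
    refine ⟨insert a D, insert_subset haS ((hDC.trans hCS).trans (erase_subset _ _)), ?_,
      hDend.insert haD (hCa.mono hDC)⟩
    rw [card_insert_of_notMem fun h ↦ (haD a h).false, hD]

theorem IsEndHomogeneous.exists_isHomogeneous [Fintype κ] {f : Finset α → κ} {k c N : ℕ}
    {D : Finset α} (hD : IsEndHomogeneous f k D) (hκ : Fintype.card κ ≤ c)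
    (hDcard : c * (N - 1) < #D) :
    ∃ C ⊆ D, #C = N ∧ IsHomogeneous f (k + 1) C := by
  classical
  have : Nonempty κ := ⟨f ∅⟩
  choose! col hcol using hD
  obtain ⟨y, -, hy⟩ := exists_lt_card_fiber_of_mul_lt_card_of_maps_to
    (t := univ) (n := N - 1) (fun a _ ↦ mem_univ (col a))
    (by rw [card_univ]; exact (Nat.mul_le_mul_right _ hκ).trans_lt hDcard)
  obtain ⟨C, hCD, hC⟩ := exists_subset_card_eq (s := {a ∈ D | col a = y}) (n := N) (by omega)
  refine ⟨C, hCD.trans (filter_subset _ _), hC, y, fun B hBC hB ↦ ?_⟩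
  have hBne : B.Nonempty := card_pos.1 (by omega)
  set a := B.min' hBne
  have haB : a ∈ B := B.min'_mem hBne
  obtain ⟨haD, hay⟩ := mem_filter.1 (hCD (hBC haB))
  rw [← insert_erase haB, ← hay]
  refine hcol a haD _ (fun b hb ↦ mem_filter.2 ⟨?_, B.min'_lt_of_mem_erase_min' hBne hb⟩) ?_
  · exact (mem_filter.1 (hCD (hBC (mem_of_mem_erase hb)))).1
  · rw [card_erase_of_mem haB, hB, Nat.add_sub_cancel]

end LinearOrder

/-- `c (N - 1) + 1` greedy steps, each paying a `k`-uniform Ramsey number. -/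
def ramseyBound : ℕ → ℕ → ℕ → ℕ
  | 0, _, N => N
  | k + 1, c, N => (fun n ↦ ramseyBound k c n + 1)^[c * (N - 1) + 1] 0

theorem exists_isHomogeneous_of_linearOrder [LinearOrder α] [Fintype κ] {c : ℕ}
    (hκ : Fintype.card κ ≤ c) (k : ℕ) {N : ℕ} {A : Finset α} (hA : ramseyBound k c N ≤ #A)
    (f : Finset α → κ) : ∃ C ⊆ A, #C = N ∧ IsHomogeneous f k C := by
  induction k generalizing N A f with
  | zero => exact exists_isHomogeneous_zero f hA
  | succ k ih =>
    obtain ⟨D, hDA, hD, hDend⟩ := exists_isEndHomogeneous (fun _ _ g hS ↦ ih hS g) f _ A hA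
    obtain ⟨C, hCD, hC, hCf⟩ := hDend.exists_isHomogeneous hκ (N := N) (by omega)
    exact ⟨C, hCD.trans hDA, hC, hCf⟩

theorem exists_isHomogeneous [Fintype κ] {c : ℕ} (hκ : Fintype.card κ ≤ c) (k : ℕ) {N : ℕ}
    {A : Finset α} (hA : ramseyBound k c N ≤ #A) (f : Finset α → κ) :
    ∃ C ⊆ A, #C = N ∧ IsHomogeneous f k C :=
  letI : LinearOrder α := IsWellOrder.linearOrder WellOrderingRel
  exists_isHomogeneous_of_linearOrder hκ k hA f

def IsHomogeneousTuple {ι : Type*} (color : (ι → Finset α) → κ) (k : ι → ℕ)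
    (C : ι → Finset α) : Prop :=
  ∃ x, ∀ B : ι → Finset α, (∀ i, B i ⊆ C i ∧ #(B i) = k i) → color B = x

theorem IsHomogeneousTuple.cons {ν : ℕ} {color : (Fin (ν + 1) → Finset α) → κ}
    {F : (Fin ν → Finset α) → κ} {k : Fin (ν + 1) → ℕ} {C₀ : Finset α} {C : Fin ν → Finset α}
    (hF : IsHomogeneousTuple F (Fin.tail k) C)
    (h : ∀ B₀ ⊆ C₀, #B₀ = k 0 → ∀ B : Fin ν → Finset α, (∀ i, B i ⊆ C i) →
      color (Fin.cons B₀ B) = F B) :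
    IsHomogeneousTuple color k (Fin.cons C₀ C) := by
  obtain ⟨x, hx⟩ := hF
  refine ⟨x, fun B hB ↦ ?_⟩
  rw [← Fin.cons_self_tail B, h (B 0) (hB 0).1 (hB 0).2 (Fin.tail B) fun i ↦ (hB i.succ).1]
  exact hx _ fun i ↦ hB i.succ

/-- The first part must absorb `c ^ ∏ i, 2 ^ R i` colours: the colourings of the tails. -/
def multiRamseyBound (c : ℕ) : {ν : ℕ} → (Fin ν → ℕ) → (Fin ν → ℕ) → Fin ν → ℕ
  | 0, _, _ => Fin.elim0
  | _ + 1, k, N =>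
    let R := multiRamseyBound c (Fin.tail k) (Fin.tail N)
    Fin.cons (ramseyBound (k 0) (c ^ ∏ i, 2 ^ R i) (N 0)) R

theorem exists_isHomogeneousTuple [Fintype κ] {ν : ℕ} (k N : Fin ν → ℕ) {A : Fin ν → Finset α}
    (hA : ∀ i, multiRamseyBound (Fintype.card κ) k N i ≤ #(A i))
    (color : (Fin ν → Finset α) → κ) :
    ∃ C : Fin ν → Finset α, (∀ i, C i ⊆ A i ∧ #(C i) = N i) ∧ IsHomogeneousTuple color k C := by
  induction ν with
  | zero => exact ⟨A, finZeroElim, color A, fun B _ ↦ congrArg color (Subsingleton.elim _ _)⟩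
  | succ ν ih =>
    classical
    set R := multiRamseyBound (Fintype.card κ) (Fin.tail k) (Fin.tail N)
    choose A' hA'A hA'card using fun i : Fin ν ↦ exists_subset_card_eq (n := R i) (hA i.succ)
    let Tail := ∀ i, ↥(A' i).powerset
    have hcard : Fintype.card (Tail → κ) = Fintype.card κ ^ ∏ i, 2 ^ R i := by
      simp only [Tail, Fintype.card_fun, Fintype.card_pi, Fintype.card_coe, card_powerset, hA'card]
    obtain ⟨C₀, hC₀A, hC₀, Φ, hΦ⟩ := exists_isHomogeneous hcard.le (k 0) (hA 0)
      fun B₀ (t : Tail) ↦ color (Fin.cons B₀ fun i ↦ t i)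
    obtain ⟨C, hC, hCcolor⟩ := ih (Fin.tail k) (Fin.tail N) (A := A') (fun i ↦ (hA'card i).ge)
      fun B ↦ Φ fun i ↦ ⟨B i ∩ A' i, mem_powerset.2 inter_subset_right⟩
    refine ⟨Fin.cons C₀ C, Fin.cases ⟨hC₀A, hC₀⟩ fun i ↦ ⟨(hC i).1.trans (hA'A i), (hC i).2⟩,
      hCcolor.cons fun B₀ hB₀ hB₀k B hB ↦ ?_⟩
    have hBA' : ∀ i, B i ⊆ A' i := fun i ↦ (hB i).trans (hC i).1
    convert congrFun (hΦ B₀ hB₀ hB₀k) fun i ↦ ⟨B i, mem_powerset.2 (hBA' i)⟩ using 3 with i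
    exact Subtype.ext (inter_eq_left.2 (hBA' i))

end Ramsey

theorem stmt1_general (c ν : ℕ) (k N : Fin ν → ℕ) :
    ∃ R : Fin ν → ℕ, (∀ i, 0 < R i) ∧
      ∀ (α : Type) (A : Fin ν → Finset α),
        (∀ i j, i ≠ j → Disjoint (A i) (A j)) →
        (∀ i, (A i).card = R i) →
        ∀ color : (Fin ν → Finset α) → Fin c,
          ∃ C : Fin ν → Finset α,
            (∀ i, C i ⊆ A i ∧ (C i).card = N i) ∧
            ∃ x : Fin c, ∀ B : Fin ν → Finset α,
              (∀ i, B i ⊆ C i ∧ (B i).card = k i) → color B = x := by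
  refine ⟨fun i ↦ Ramsey.multiRamseyBound c k N i + 1, fun i ↦ Nat.succ_pos _,
    fun α A _ hA color ↦ ?_⟩
  refine Ramsey.exists_isHomogeneousTuple k N (fun i ↦ ?_) color
  rw [hA, Fintype.card_fin]
  exact Nat.le_succ _

/-- Multipartite Ramsey theorem: given `c` colors and sizes `k i`, `N i`, there
are `R i` so that for any pairwise disjoint finite sets `A i` of cardinality
`R i` and any `c`-coloring of tuples `(B₁,…,B_ν)` with `B i ⊆ A i`, `|B i| = k i`,
there exist `C i ⊆ A i` with `|C i| = N i` such that all such tuples with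
`B i ⊆ C i` receive the same color. -/
theorem stmt1 (c ν : ℕ) (hc : 0 < c) (k N : Fin ν → ℕ)
    (hk : ∀ i, 0 < k i) (hN : ∀ i, 0 < N i) :
    ∃ R : Fin ν → ℕ, (∀ i, 0 < R i) ∧
      ∀ (α : Type) (A : Fin ν → Finset α),
        (∀ i j, i ≠ j → Disjoint (A i) (A j)) →
        (∀ i, (A i).card = R i) →
        ∀ color : (Fin ν → Finset α) → Fin c,
          ∃ C : Fin ν → Finset α,
            (∀ i, C i ⊆ A i ∧ (C i).card = N i) ∧
            ∃ x : Fin c, ∀ B : Fin ν → Finset α,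
              (∀ i, B i ⊆ C i ∧ (B i).card = k i) → color B = x :=
  stmt1_general c ν k N
end

section
/- Let f : [0,1]² → {0,1} be measurable with f(x,y) = f(y,x) and f(x,y)·f(y,z)·f(x,z) = 0 for almost all (x,y,z) ∈ [0,1]³. Then there exists a measurable function g : [0,1]² → {0,1} with g = f almost everywhere, such that g(x,y) = g(y,x) and g(x,y)·g(y,z)·g(x,z) = 0 for ALL x,y,z ∈ [0,1]. -/
open MeasureTheory Set
open MeasureTheory Set Filter Metric
open scoped ENNReal
noncomputable section
namespace TRL
def nb (f : ℝ → ℝ → ℝ) (x : ℝ) : Set ℝ := {u | u ∈ Icc (0:ℝ) 1 ∧ f x u = 1}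
variable {f : ℝ → ℝ → ℝ}
lemma meas_slice (hf : Measurable (Function.uncurry f)) (x : ℝ) : Measurable (f x) :=
  hf.comp measurable_prodMk_left
lemma meas_nb (hf : Measurable (Function.uncurry f)) (x : ℝ) : MeasurableSet (nb f x) := by
  have : nb f x = Icc 0 1 ∩ (f x) ⁻¹' {1} := by ext u; simp [nb]
  rw [this]
  exact measurableSet_Icc.inter ((meas_slice hf x) (measurableSet_singleton 1))

/-- generic: measurability of p ↦ volume (nb f p.1 ∩ S p.2) for a "measurable family" S -/
lemma meas_vol_aux (hf : Measurable (Function.uncurry f))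
    {T : Set ((ℝ × ℝ) × ℝ)} (hT : MeasurableSet T)
    (hfib : ∀ p : ℝ × ℝ, MeasurableSet {u | ((p, u) : (ℝ × ℝ) × ℝ) ∈ T}) :
    Measurable fun p : ℝ × ℝ => volume {u | ((p, u) : (ℝ × ℝ) × ℝ) ∈ T} := by
  have h1 : ∀ p : ℝ × ℝ, volume {u | ((p, u) : (ℝ × ℝ) × ℝ) ∈ T}
      = ∫⁻ u, T.indicator 1 (p, u) := by
    intro p
    rw [← lintegral_indicator_one (hfib p)]
    exact (lintegral_congr fun u => rfl)
  simp_rw [h1]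
  exact Measurable.lintegral_prod_right' ((measurable_const.indicator hT))
end TRL
namespace TRL
variable {f : ℝ → ℝ → ℝ}

lemma meas_vol_inter (hf : Measurable (Function.uncurry f)) :
    Measurable fun p : ℝ × ℝ => volume (nb f p.1 ∩ nb f p.2) := by
  have hEq : ∀ p : ℝ × ℝ, nb f p.1 ∩ nb f p.2 =
      {u | ((p, u) : (ℝ × ℝ) × ℝ) ∈
        {q : (ℝ × ℝ) × ℝ | q.2 ∈ Icc (0:ℝ) 1 ∧ f q.1.1 q.2 = 1 ∧ f q.1.2 q.2 = 1}} := by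
    intro p; ext u
    simp only [nb, mem_inter_iff, mem_setOf_eq]
    tauto
  simp_rw [hEq]
  refine meas_vol_aux hf ?_ ?_
  · refine (measurable_snd measurableSet_Icc).inter (MeasurableSet.inter ?_ ?_)
    · exact (hf.comp ((measurable_fst.comp measurable_fst).prodMk measurable_snd))
        (measurableSet_singleton 1)
    · exact (hf.comp ((measurable_snd.comp measurable_fst).prodMk measurable_snd))
        (measurableSet_singleton 1)
  · intro p
    rw [← hEq p]
    exact (meas_nb hf p.1).inter (meas_nb hf p.2)

lemma meas_vol_ball (hf : Measurable (Function.uncurry f)) (r : ℝ) :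
    Measurable fun p : ℝ × ℝ => volume (nb f p.1 ∩ closedBall p.2 r) := by
  have hEq : ∀ p : ℝ × ℝ, nb f p.1 ∩ closedBall p.2 r =
      {u | ((p, u) : (ℝ × ℝ) × ℝ) ∈
        {q : (ℝ × ℝ) × ℝ | (q.2 ∈ Icc (0:ℝ) 1 ∧ f q.1.1 q.2 = 1) ∧ dist q.2 q.1.2 ≤ r}} := by
    intro p; ext u
    simp only [nb, mem_inter_iff, mem_setOf_eq, mem_closedBall]
  simp_rw [hEq]
  refine meas_vol_aux hf ?_ ?_
  · refine MeasurableSet.inter (MeasurableSet.inter (measurable_snd measurableSet_Icc) ?_) ?_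
    · exact (hf.comp ((measurable_fst.comp measurable_fst).prodMk measurable_snd))
        (measurableSet_singleton 1)
    · exact measurableSet_le (measurable_dist.comp
        (measurable_snd.prodMk (measurable_snd.comp measurable_fst))) measurable_const
  · intro p
    rw [← hEq p]
    exact (meas_nb hf p.1).inter measurableSet_closedBall
end TRL
namespace TRL
def rho (f : ℝ → ℝ → ℝ) (x y : ℝ) (n : ℕ) : ℝ≥0∞ :=
  volume (nb f x ∩ closedBall y (1 / ((n : ℝ) + 1))) /
    volume (closedBall y (1 / ((n : ℝ) + 1)))
def dens (f : ℝ → ℝ → ℝ) (x y : ℝ) : Prop := 1 ≤ liminf (rho f x y) atTop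
def P (f : ℝ → ℝ → ℝ) (x y : ℝ) : Prop :=
  f x y = 1 ∧ f y x = 1 ∧ volume (nb f x ∩ nb f y) = 0 ∧ dens f x y ∧ dens f y x
variable {f : ℝ → ℝ → ℝ}

lemma meas_rho (hf : Measurable (Function.uncurry f)) (n : ℕ) :
    Measurable fun p : ℝ × ℝ => rho f p.1 p.2 n :=
  by simp_rw [rho, Real.volume_closedBall]; exact (meas_vol_ball hf _).div measurable_const

lemma measurableSet_dens (hf : Measurable (Function.uncurry f)) :
    MeasurableSet {p : ℝ × ℝ | dens f p.1 p.2} :=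
  measurableSet_le measurable_const (Measurable.liminf fun n => meas_rho hf n)

lemma measurableSet_P (hf : Measurable (Function.uncurry f)) :
    MeasurableSet {p : ℝ × ℝ | P f p.1 p.2} := by
  have h1 : MeasurableSet {p : ℝ × ℝ | f p.1 p.2 = 1} :=
    (hf.comp (measurable_fst.prodMk measurable_snd)) (measurableSet_singleton 1)
  have h2 : MeasurableSet {p : ℝ × ℝ | f p.2 p.1 = 1} :=
    (hf.comp (measurable_snd.prodMk measurable_fst)) (measurableSet_singleton 1)
  have h3 : MeasurableSet {p : ℝ × ℝ | volume (nb f p.1 ∩ nb f p.2) = 0} :=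
    (meas_vol_inter hf) (measurableSet_singleton 0)
  have h4 : MeasurableSet {p : ℝ × ℝ | dens f p.1 p.2} := measurableSet_dens hf
  have h5 : MeasurableSet {p : ℝ × ℝ | dens f p.2 p.1} := by
    have : {p : ℝ × ℝ | dens f p.2 p.1} = Prod.swap ⁻¹' {p : ℝ × ℝ | dens f p.1 p.2} := rfl
    rw [this]; exact (measurableSet_dens hf).preimage measurable_swap
  exact h1.inter (h2.inter (h3.inter (h4.inter h5)))
end TRL
namespace TRL
variable {f : ℝ → ℝ → ℝ}

lemma inter_pos {s t : Set ℝ} {z : ℝ}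
    (h1 : 1 ≤ liminf (fun n : ℕ =>
      volume (s ∩ closedBall z (1 / ((n : ℝ) + 1))) /
        volume (closedBall z (1 / ((n : ℝ) + 1)))) atTop)
    (h2 : 1 ≤ liminf (fun n : ℕ =>
      volume (t ∩ closedBall z (1 / ((n : ℝ) + 1))) /
        volume (closedBall z (1 / ((n : ℝ) + 1)))) atTop)
    (ht : MeasurableSet t) :
    volume (s ∩ t) ≠ 0 := by
  intro hst
  have hhalf : (1:ℝ≥0∞)/2 < 1 := by norm_num
  have e1 := Filter.eventually_lt_of_lt_liminf (lt_of_lt_of_le hhalf h1)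
  have e2 := Filter.eventually_lt_of_lt_liminf (lt_of_lt_of_le hhalf h2)
  obtain ⟨n, hn1, hn2⟩ := (e1.and e2).exists
  set r : ℝ := 1 / ((n : ℝ) + 1) with hr
  have hrpos : 0 < r := by positivity
  set B := closedBall z r
  have hBvol : volume B = ENNReal.ofReal (2 * r) := Real.volume_closedBall z r
  have hB0 : volume B ≠ 0 := by
    rw [hBvol]; simp [ENNReal.ofReal_eq_zero]; linarith
  have hBtop : volume B ≠ ∞ := by rw [hBvol]; exact ENNReal.ofReal_ne_top
  have hs' : volume B / 2 < volume (s ∩ B) := by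
    have := (ENNReal.lt_div_iff_mul_lt (Or.inl hB0) (Or.inl hBtop)).mp hn1
    calc volume B / 2 = 1/2 * volume B := by
          simp [ENNReal.div_eq_inv_mul]

      _ < volume (s ∩ B) := this
  have ht' : volume B / 2 < volume (t ∩ B) := by
    have := (ENNReal.lt_div_iff_mul_lt (Or.inl hB0) (Or.inl hBtop)).mp hn2
    calc volume B / 2 = 1/2 * volume B := by
          simp [ENNReal.div_eq_inv_mul]

      _ < volume (t ∩ B) := this
  have hint : volume ((s ∩ B) ∩ (t ∩ B)) = 0 := by
    refine measure_mono_null ?_ hst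
    intro u hu; exact ⟨hu.1.1, hu.2.1⟩
  have hsum : volume (s ∩ B) + volume (t ∩ B) ≤ volume B := by
    have h6 : volume ((s ∩ B) ∪ (t ∩ B)) + volume ((s ∩ B) ∩ (t ∩ B))
        = volume (s ∩ B) + volume (t ∩ B) :=
      measure_union_add_inter _ (ht.inter measurableSet_closedBall)
    rw [hint, add_zero] at h6
    rw [← h6]
    exact measure_mono (by intro u hu; rcases hu with h | h; exacts [h.2, h.2])
  have : volume B < volume B := by
    calc volume B = volume B / 2 + volume B / 2 := (ENNReal.add_halves _).symm
      _ < volume (s ∩ B) + volume (t ∩ B) := ENNReal.add_lt_add hs' ht'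
      _ ≤ volume B := hsum
  exact absurd this (lt_irrefl _)

lemma not_P_triangle (hf : Measurable (Function.uncurry f)) (x y z : ℝ)
    (hxy : P f x y) (hyz : P f y z) (hxz : P f x z) : False := by
  have h1 : 1 ≤ liminf (rho f x z) atTop := hxz.2.2.2.1
  have h2 : 1 ≤ liminf (rho f y z) atTop := hyz.2.2.2.1
  exact inter_pos h1 h2 (meas_nb hf y) hxy.2.2.1
end TRL
namespace TRL
variable {f : ℝ → ℝ → ℝ}

lemma seq_tendsto : Tendsto (fun n : ℕ => 1 / ((n : ℝ) + 1)) atTop (nhdsWithin 0 (Ioi 0)) := by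
  refine tendsto_nhdsWithin_of_tendsto_nhds_of_eventually_within _
    tendsto_one_div_add_atTop_nhds_zero_nat ?_
  filter_upwards with n
  have : (0:ℝ) < 1 / ((n : ℝ) + 1) := by positivity
  exact this

lemma ae_dens (hf : Measurable (Function.uncurry f)) (x : ℝ) :
    ∀ᵐ y ∂(volume : Measure ℝ), (y ∈ Icc (0:ℝ) 1 ∧ f x y = 1) → dens f x y := by
  filter_upwards [Besicovitch.ae_tendsto_measure_inter_div_of_measurableSet volume
    (meas_nb hf x)] with y hy hmem
  have hy1 : y ∈ nb f x := ⟨hmem.1, hmem.2⟩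
  rw [indicator_of_mem hy1] at hy
  have h2 : Tendsto (rho f x y) atTop (nhds 1) := by
    have := hy.comp seq_tendsto
    exact this
  rw [dens, h2.liminf_eq]

lemma measure_preserving_3 (ν : Measure ℝ) [SigmaFinite ν] :
    MeasurePreserving (fun z : Fin 3 → ℝ => (z 0, (z 1, z 2)))
      (Measure.pi fun _ : Fin 3 => ν) (ν.prod (ν.prod ν)) := by
  have h3 := measurePreserving_piFinSuccAbove (fun _ : Fin 3 => ν) 0
  have h2 := measurePreserving_piFinSuccAbove (fun _ : Fin 2 => ν) 0
  have h1 := measurePreserving_funUnique ν (Fin 1)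
  have hInner := (((MeasurePreserving.id ν).prod h1).comp h2)
  have hAll := ((MeasurePreserving.id ν).prod hInner).comp h3
  exact hAll
end TRL
namespace TRL
lemma P_symm {f : ℝ → ℝ → ℝ} {x y : ℝ} (h : P f x y) : P f y x :=
  ⟨h.2.1, h.1, by rw [inter_comm]; exact h.2.2.1, h.2.2.2.2, h.2.2.2.1⟩
end TRL


end

open Filter Metric
open scoped ENNReal

/-- Continuous triangle removal lemma: a `{0,1}`-valued graphon with almost no
triangles can be modified on a null set so that it has no triangles at all. -/
theorem stmt2 (f : ℝ → ℝ → ℝ)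
    (hf : Measurable (Function.uncurry f))
    (hval : ∀ x y, f x y = 0 ∨ f x y = 1)
    (hae : ∀ᵐ z ∂(Measure.pi fun _ : Fin 3 => volume.restrict (Set.Icc (0:ℝ) 1)),
      f (z 0) (z 1) = f (z 1) (z 0) ∧
      f (z 0) (z 1) * f (z 1) (z 2) * f (z 0) (z 2) = 0) :
    ∃ g : ℝ → ℝ → ℝ,
      Measurable (Function.uncurry g) ∧
      (∀ x y, g x y = 0 ∨ g x y = 1) ∧
      (∀ᵐ p ∂((volume.restrict (Set.Icc (0:ℝ) 1)).prod
          (volume.restrict (Set.Icc (0:ℝ) 1))), g p.1 p.2 = f p.1 p.2) ∧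
      (∀ x ∈ Set.Icc (0:ℝ) 1, ∀ y ∈ Set.Icc (0:ℝ) 1, ∀ z ∈ Set.Icc (0:ℝ) 1,
        g x y = g y x ∧ g x y * g y z * g x z = 0) := by
  classical
  set ν : Measure ℝ := volume.restrict (Icc (0:ℝ) 1) with hνdef
  have hν0 : ν ≠ 0 := by
    intro h
    have h2 : ν univ = 0 := by rw [h]; simp
    rw [hνdef, Measure.restrict_apply_univ, Real.volume_Icc] at h2
    norm_num at h2
  haveI : (ae ν).NeBot := ae_neBot.mpr hν0
  -- measurability bits
  have ma : Measurable fun w : ℝ × (ℝ × ℝ) => w.1 := measurable_fst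
  have mb : Measurable fun w : ℝ × (ℝ × ℝ) => w.2.1 := measurable_fst.comp measurable_snd
  have mc : Measurable fun w : ℝ × (ℝ × ℝ) => w.2.2 := measurable_snd.comp measurable_snd
  have m1 : Measurable fun w : ℝ × (ℝ × ℝ) => f w.1 w.2.1 := hf.comp (ma.prodMk mb)
  have m2 : Measurable fun w : ℝ × (ℝ × ℝ) => f w.2.1 w.1 := hf.comp (mb.prodMk ma)
  have m3 : Measurable fun w : ℝ × (ℝ × ℝ) => f w.2.1 w.2.2 := hf.comp (mb.prodMk mc)
  have m4 : Measurable fun w : ℝ × (ℝ × ℝ) => f w.1 w.2.2 := hf.comp (ma.prodMk mc)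
  have hRmeas : MeasurableSet {w : ℝ × (ℝ × ℝ) |
      f w.1 w.2.1 = f w.2.1 w.1 ∧ f w.1 w.2.1 * f w.2.1 w.2.2 * f w.1 w.2.2 = 0} :=
    (measurableSet_eq_fun m1 m2).inter (((m1.mul m3).mul m4) (measurableSet_singleton 0))
  -- transfer the a.e. hypothesis to the product measure
  have hmp := TRL.measure_preserving_3 ν
  have hae2 : ∀ᵐ w ∂(ν.prod (ν.prod ν)),
      f w.1 w.2.1 = f w.2.1 w.1 ∧ f w.1 w.2.1 * f w.2.1 w.2.2 * f w.1 w.2.2 = 0 := by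
    rw [← hmp.map_eq, ae_map_iff hmp.measurable.aemeasurable hRmeas]
    exact hae
  have hfact : ∀ᵐ x ∂ν, ∀ᵐ y ∂ν, ∀ᵐ u ∂ν,
      f x y = f y x ∧ f x y * f y u * f x u = 0 := by
    filter_upwards [Measure.ae_ae_of_ae_prod hae2] with x hx
    exact Measure.ae_ae_of_ae_prod hx
  have hsymm : ∀ᵐ x ∂ν, ∀ᵐ y ∂ν, f x y = f y x := by
    filter_upwards [hfact] with x hx
    filter_upwards [hx] with y hy
    obtain ⟨u, hu⟩ := hy.exists
    exact hu.1
  have hvol : ∀ᵐ x ∂ν, ∀ᵐ y ∂ν, f x y = 1 → volume (TRL.nb f x ∩ TRL.nb f y) = 0 := by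
    filter_upwards [hfact] with x hx
    filter_upwards [hx] with y hy
    intro h1
    have hu : ∀ᵐ u ∂ν, f y u * f x u = 0 := by
      filter_upwards [hy] with u hu
      have h2 := hu.2
      rwa [h1, one_mul] at h2
    have hnull : ν {u | ¬ f y u * f x u = 0} = 0 := ae_iff.mp hu
    have hsub : TRL.nb f x ∩ TRL.nb f y ⊆ {u | ¬ f y u * f x u = 0} := by
      intro u hu'
      have h3 := hu'.1.2
      have h4 := hu'.2.2
      simp only [mem_setOf_eq, h3, h4, one_mul]
      norm_num
    have hm : MeasurableSet (TRL.nb f x ∩ TRL.nb f y) :=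
      (TRL.meas_nb hf x).inter (TRL.meas_nb hf y)
    have hz : ν (TRL.nb f x ∩ TRL.nb f y) = 0 := measure_mono_null hsub hnull
    rw [hνdef, Measure.restrict_apply hm] at hz
    rwa [inter_eq_self_of_subset_left (fun u hu' => hu'.1.1)] at hz
  -- the four bad sets
  have hm1 : MeasurableSet {p : ℝ × ℝ | f p.1 p.2 = 1} := hf (measurableSet_singleton 1)
  have hmdens : MeasurableSet {p : ℝ × ℝ | TRL.dens f p.1 p.2} := TRL.measurableSet_dens hf
  have hmB1 : MeasurableSet {p : ℝ × ℝ | f p.1 p.2 ≠ f p.2 p.1} :=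
    (measurableSet_eq_fun (hf.comp (measurable_fst.prodMk measurable_snd))
      (hf.comp (measurable_snd.prodMk measurable_fst))).compl
  have hB1 : (ν.prod ν) {p : ℝ × ℝ | f p.1 p.2 ≠ f p.2 p.1} = 0 := by
    rw [Measure.measure_prod_null hmB1]
    filter_upwards [hsymm] with x hx
    exact ae_iff.mp hx
  have hmB2 : MeasurableSet {p : ℝ × ℝ | f p.1 p.2 = 1 ∧
      volume (TRL.nb f p.1 ∩ TRL.nb f p.2) ≠ 0} :=
    hm1.inter ((TRL.meas_vol_inter hf) (measurableSet_singleton 0)).compl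
  have hB2 : (ν.prod ν) {p : ℝ × ℝ | f p.1 p.2 = 1 ∧
      volume (TRL.nb f p.1 ∩ TRL.nb f p.2) ≠ 0} = 0 := by
    rw [Measure.measure_prod_null hmB2]
    filter_upwards [hvol] with x hx
    have h5 : ν {y | ¬ (f x y = 1 → volume (TRL.nb f x ∩ TRL.nb f y) = 0)} = 0 := ae_iff.mp hx
    refine measure_mono_null (fun y hy => ?_) h5
    intro himp
    exact hy.2 (himp hy.1)
  have hmB3 : MeasurableSet {p : ℝ × ℝ | f p.1 p.2 = 1 ∧ ¬ TRL.dens f p.1 p.2} :=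
    hm1.inter hmdens.compl
  have hB3 : (ν.prod ν) {p : ℝ × ℝ | f p.1 p.2 = 1 ∧ ¬ TRL.dens f p.1 p.2} = 0 := by
    rw [Measure.measure_prod_null hmB3]
    refine Filter.Eventually.of_forall fun x => ?_
    have had := TRL.ae_dens hf x
    have hnull : volume {y | ¬ ((y ∈ Icc (0:ℝ) 1 ∧ f x y = 1) → TRL.dens f x y)} = 0 :=
      ae_iff.mp had
    have hmY : MeasurableSet {y : ℝ | f x y = 1 ∧ ¬ TRL.dens f x y} :=
      ((TRL.meas_slice hf x) (measurableSet_singleton 1)).inter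
        ((hmdens.preimage measurable_prodMk_left).compl)
    show ν (Prod.mk x ⁻¹' {p : ℝ × ℝ | f p.1 p.2 = 1 ∧ ¬ TRL.dens f p.1 p.2}) = 0
    have hpre : Prod.mk x ⁻¹' {p : ℝ × ℝ | f p.1 p.2 = 1 ∧ ¬ TRL.dens f p.1 p.2}
        = {y : ℝ | f x y = 1 ∧ ¬ TRL.dens f x y} := rfl
    rw [hpre, hνdef, Measure.restrict_apply hmY]
    refine measure_mono_null ?_ hnull
    intro y hy
    exact fun himp => hy.1.2 (himp ⟨hy.2, hy.1.1⟩)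
  have hmB4 : MeasurableSet {p : ℝ × ℝ | f p.2 p.1 = 1 ∧ ¬ TRL.dens f p.2 p.1} :=
    hmB3.preimage measurable_swap
  have hB4 : (ν.prod ν) {p : ℝ × ℝ | f p.2 p.1 = 1 ∧ ¬ TRL.dens f p.2 p.1} = 0 := by
    have heq : {p : ℝ × ℝ | f p.2 p.1 = 1 ∧ ¬ TRL.dens f p.2 p.1}
        = Prod.swap ⁻¹' {p : ℝ × ℝ | f p.1 p.2 = 1 ∧ ¬ TRL.dens f p.1 p.2} := rfl
    rw [heq, ← Measure.map_apply measurable_swap hmB3, Measure.prod_swap]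
    exact hB3
  -- the bad set is null
  have hbad : (ν.prod ν) {p : ℝ × ℝ | f p.1 p.2 = 1 ∧ ¬ TRL.P f p.1 p.2} = 0 := by
    refine measure_mono_null ?_
      (measure_union_null (measure_union_null (measure_union_null hB1 hB2) hB3) hB4)
    intro p hp
    obtain ⟨h1, hnp⟩ := hp
    by_cases hsym : f p.1 p.2 = f p.2 p.1
    · by_cases hvol' : volume (TRL.nb f p.1 ∩ TRL.nb f p.2) = 0
      · by_cases hd1 : TRL.dens f p.1 p.2
        · by_cases hd2 : TRL.dens f p.2 p.1
          · exact absurd ⟨h1, hsym ▸ h1, hvol', hd1, hd2⟩ hnp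
          · exact Or.inr ⟨hsym ▸ h1, hd2⟩
        · exact Or.inl (Or.inr ⟨h1, hd1⟩)
      · exact Or.inl (Or.inl (Or.inr ⟨h1, hvol'⟩))
    · exact Or.inl (Or.inl (Or.inl hsym))
  -- define g
  set S : Set (ℝ × ℝ) := {p : ℝ × ℝ | TRL.P f p.1 p.2} with hSdef
  have hSmeas : MeasurableSet S := TRL.measurableSet_P hf
  refine ⟨fun x y => S.indicator (fun _ => (1:ℝ)) (x, y), ?_, ?_, ?_, ?_⟩
  · have huncurry : Function.uncurry (fun x y => S.indicator (fun _ => (1:ℝ)) (x, y))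
        = S.indicator (fun _ => (1:ℝ)) := by
      funext p
      cases p
      rfl
    rw [huncurry]
    exact measurable_const.indicator hSmeas
  · intro x y
    by_cases h : (x, y) ∈ S
    · right; exact Set.indicator_of_mem h _
    · left; exact Set.indicator_of_notMem h _
  · filter_upwards [measure_eq_zero_iff_ae_notMem.mp hbad] with p hp
    show S.indicator (fun _ => (1:ℝ)) (p.1, p.2) = f p.1 p.2
    by_cases hP : p ∈ S
    · have h1 : f p.1 p.2 = 1 := hP.1
      have hP' : ((p.1, p.2) : ℝ × ℝ) ∈ S := by rwa [Prod.mk.eta]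
      rw [Set.indicator_of_mem hP', h1]
    · have h0 : f p.1 p.2 ≠ 1 := fun h => hp ⟨h, hP⟩
      have hP' : ((p.1, p.2) : ℝ × ℝ) ∉ S := by rwa [Prod.mk.eta]
      rw [Set.indicator_of_notMem hP']
      rcases hval p.1 p.2 with h | h
      · rw [h]
      · exact absurd h h0
  · intro x _ y _ z _
    have hg0 : ∀ a b : ℝ, ¬ TRL.P f a b → S.indicator (fun _ => (1:ℝ)) (a, b) = 0 :=
      fun a b h => Set.indicator_of_notMem (show ((a, b) : ℝ × ℝ) ∉ S from h) _
    have hg1 : ∀ a b : ℝ, TRL.P f a b → S.indicator (fun _ => (1:ℝ)) (a, b) = 1 :=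
      fun a b h => Set.indicator_of_mem (show ((a, b) : ℝ × ℝ) ∈ S from h) _
    constructor
    · show S.indicator (fun _ => (1:ℝ)) (x, y) = S.indicator (fun _ => (1:ℝ)) (y, x)
      by_cases h1 : TRL.P f x y
      · rw [hg1 _ _ h1, hg1 _ _ (TRL.P_symm h1)]
      · rw [hg0 _ _ h1, hg0 _ _ (fun h2 => h1 (TRL.P_symm h2))]
    · show S.indicator (fun _ => (1:ℝ)) (x, y) * S.indicator (fun _ => (1:ℝ)) (y, z) *
        S.indicator (fun _ => (1:ℝ)) (x, z) = 0
      by_cases hxy : TRL.P f x y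
      · by_cases hyz : TRL.P f y z
        · by_cases hxz : TRL.P f x z
          · exact (TRL.not_P_triangle hf x y z hxy hyz hxz).elim
          · rw [hg0 _ _ hxz, mul_zero]
        · rw [hg0 _ _ hyz, mul_zero, zero_mul]
      · rw [hg0 _ _ hxy, zero_mul, zero_mul]
end

section
/- Let f : [0,1]² → {0,1} be measurable and symmetric almost everywhere, and let P ⊆ {0,1}³ be a fixed set closed under coordinate permutations such that for almost all (x,y,z) ∈ [0,1]³ the pattern (f(x,y), f(y,z), f(x,z)) avoids P. Then there exists a symmetric measurable g with g = f a.e. such that (g(x,y), g(y,z), g(x,z)) avoids P for ALL pairwise distinct x, y, z ∈ [0,1]. -/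
open MeasureTheory Set Filter Metric ENNReal Topology symmDiff

namespace Stmt12

noncomputable section

@[reducible] def M : Measure ℝ := MeasureTheory.volume.restrict (Set.Icc (0:ℝ) 1)

lemma isProb : IsProbabilityMeasure M := by
  constructor
  simp [Real.volume_Icc]

lemma mu_ne_zero : M ≠ 0 := by
  have := isProb
  exact IsProbabilityMeasure.ne_zero _

lemma ae_neBot' : (ae M).NeBot := ae_neBot.mpr mu_ne_zero

@[reducible] def V2 : Measure (ℝ × ℝ) := M.prod M
@[reducible] def V3 : Measure ((ℝ × ℝ) × ℝ) := V2.prod M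

lemma map_pi_aux (m : (ℝ×ℝ)×ℝ → (Fin 3 → ℝ)) (hm : Measurable m)
    (hbox : ∀ s : Fin 3 → Set ℝ, (∀ i, MeasurableSet (s i)) →
      V3 (m ⁻¹' (univ.pi s)) = M (s 0) * M (s 1) * M (s 2)) :
    (Measure.pi fun _ : Fin 3 => M) = V3.map m := by
  have := isProb
  refine Measure.pi_eq fun s hs => ?_
  rw [Measure.map_apply hm (MeasurableSet.univ_pi hs), hbox s hs, Fin.prod_univ_three]

lemma meas_m3 : Measurable (fun q : (ℝ×ℝ)×ℝ => (![q.1.1, q.1.2, q.2] : Fin 3 → ℝ)) := by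
  refine measurable_pi_lambda _ fun i => ?_
  fin_cases i <;> simp <;> fun_prop

lemma meas_m4 : Measurable (fun q : (ℝ×ℝ)×ℝ => (![q.1.1, q.2, q.1.2] : Fin 3 → ℝ)) := by
  refine measurable_pi_lambda _ fun i => ?_
  fin_cases i <;> simp <;> fun_prop

lemma pi_m3 : (Measure.pi fun _ : Fin 3 => M) =
    V3.map (fun q : (ℝ×ℝ)×ℝ => (![q.1.1, q.1.2, q.2] : Fin 3 → ℝ)) := by
  refine map_pi_aux _ meas_m3 fun s hs => ?_
  have : (fun q : (ℝ×ℝ)×ℝ => (![q.1.1, q.1.2, q.2] : Fin 3 → ℝ)) ⁻¹' (univ.pi s)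
      = (s 0 ×ˢ s 1) ×ˢ s 2 := by
    ext ⟨⟨x, y⟩, z⟩
    simp [Set.mem_pi, Fin.forall_fin_succ, and_assoc]
  rw [this, Measure.prod_prod, Measure.prod_prod]

lemma pi_m4 : (Measure.pi fun _ : Fin 3 => M) =
    V3.map (fun q : (ℝ×ℝ)×ℝ => (![q.1.1, q.2, q.1.2] : Fin 3 → ℝ)) := by
  refine map_pi_aux _ meas_m4 fun s hs => ?_
  have : (fun q : (ℝ×ℝ)×ℝ => (![q.1.1, q.2, q.1.2] : Fin 3 → ℝ)) ⁻¹' (univ.pi s)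
      = (s 0 ×ˢ s 2) ×ˢ s 1 := by
    ext ⟨⟨x, y⟩, z⟩
    simp [Set.mem_pi, Fin.forall_fin_succ]
    tauto
  rw [this, Measure.prod_prod, Measure.prod_prod]
  ring

lemma ae_pair_std {Q : ℝ → ℝ → ℝ → Prop}
    (h : ∀ᵐ z ∂(Measure.pi fun _ : Fin 3 => M), Q (z 0) (z 1) (z 2)) :
    ∀ᵐ p ∂V2, ∀ᵐ z ∂M, Q p.1 p.2 z := by
  rw [pi_m3] at h
  have h2 := ae_of_ae_map meas_m3.aemeasurable h
  have h3 : ∀ᵐ q ∂V3, Q q.1.1 q.1.2 q.2 := by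
    filter_upwards [h2] with q hq
    simpa using hq
  exact Measure.ae_ae_of_ae_prod h3

lemma ae_pair_mid {Q : ℝ → ℝ → ℝ → Prop}
    (h : ∀ᵐ z ∂(Measure.pi fun _ : Fin 3 => M), Q (z 0) (z 1) (z 2)) :
    ∀ᵐ p ∂V2, ∀ᵐ t ∂M, Q p.1 t p.2 := by
  rw [pi_m4] at h
  have h2 := ae_of_ae_map meas_m4.aemeasurable h
  have h3 : ∀ᵐ q ∂V3, Q q.1.1 q.2 q.1.2 := by
    filter_upwards [h2] with q hq
    simpa using hq
  exact Measure.ae_ae_of_ae_prod h3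

lemma swap_ae {Q : ℝ × ℝ → Prop} (h : ∀ᵐ p ∂V2, Q p) :
    ∀ᵐ p ∂V2, Q p.swap := by
  have hswap : V2.map Prod.swap = V2 := Measure.prod_swap
  rw [← hswap] at h
  exact ae_of_ae_map measurable_swap.aemeasurable h

lemma prod_conull {G : Set ℝ} (hG : ∀ᵐ x ∂M, x ∈ G) :
    ∀ᵐ p ∂V2, p.1 ∈ G ∧ p.2 ∈ G := by
  have := isProb
  have h1 : ∀ᵐ p ∂V2, p.1 ∈ G := by
    have : M Gᶜ = 0 := ae_iff.mp hG
    have : V2 (Prod.fst ⁻¹' Gᶜ) = 0 := by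
      have : (Prod.fst ⁻¹' Gᶜ : Set (ℝ×ℝ)) = Gᶜ ×ˢ univ := by ext p; simp
      rw [this, Measure.prod_prod]
      simp [‹M Gᶜ = 0›]
    exact ae_iff.mpr this
  have h2 : ∀ᵐ p ∂V2, p.2 ∈ G := by
    have : M Gᶜ = 0 := ae_iff.mp hG
    have : V2 (Prod.snd ⁻¹' Gᶜ) = 0 := by
      have : (Prod.snd ⁻¹' Gᶜ : Set (ℝ×ℝ)) = univ ×ˢ Gᶜ := by ext p; simp
      rw [this, Measure.prod_prod]
      simp [‹M Gᶜ = 0›]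
    exact ae_iff.mpr this
  exact h1.and h2

lemma mem_Icc_ae : ∀ᵐ p ∂V2, p.1 ∈ Icc (0:ℝ) 1 ∧ p.2 ∈ Icc (0:ℝ) 1 :=
  prod_conull (ae_restrict_mem measurableSet_Icc)


/-! ### Density machinery -/

def HalfS (S : Set ℝ) (y : ℝ) : Prop :=
  ∀ᶠ n : ℕ in atTop, ((n : ℝ≥0∞) + 1)⁻¹ < volume (S ∩ closedBall y (1/((n:ℝ)+1)))

lemma inv_np_ne_zero (n : ℕ) : ((n : ℝ≥0∞) + 1)⁻¹ ≠ 0 := by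
  simp [ENNReal.inv_ne_zero]

lemma inv_np_ne_top (n : ℕ) : ((n : ℝ≥0∞) + 1)⁻¹ ≠ ∞ := by
  simp [ENNReal.inv_ne_top]

lemma ofReal_inv_np (n : ℕ) : ENNReal.ofReal (1/((n:ℝ)+1)) = ((n : ℝ≥0∞) + 1)⁻¹ := by
  rw [one_div, ENNReal.ofReal_inv_of_pos (by positivity)]
  congr 1
  rw [ENNReal.ofReal_add (by positivity) zero_le_one]
  simp [ENNReal.ofReal_natCast]

lemma vol_cb (y : ℝ) (n : ℕ) :
    volume (closedBall y (1/((n:ℝ)+1))) = ((n : ℝ≥0∞) + 1)⁻¹ + ((n : ℝ≥0∞) + 1)⁻¹ := by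
  rw [Real.volume_closedBall]
  rw [two_mul, ENNReal.ofReal_add (by positivity) (by positivity), ofReal_inv_np]

lemma half_half {S T : Set ℝ} {y : ℝ} (hT : MeasurableSet T)
    (hS' : HalfS S y) (hT' : HalfS T y) : volume (S ∩ T) ≠ 0 := by
  intro h0
  obtain ⟨n, hn1, hn2⟩ := (hS'.and hT').exists
  set r : ℝ := 1/((n:ℝ)+1)
  set a : ℝ≥0∞ := ((n : ℝ≥0∞) + 1)⁻¹
  have key := measure_union_add_inter (μ := volume) (t := T ∩ closedBall y r)
    (S ∩ closedBall y r) (hT.inter measurableSet_closedBall)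
  have hsub : (S ∩ closedBall y r) ∩ (T ∩ closedBall y r) ⊆ S ∩ T := by
    intro t ht; exact ⟨ht.1.1, ht.2.1⟩
  have hz : volume ((S ∩ closedBall y r) ∩ (T ∩ closedBall y r)) = 0 :=
    le_antisymm (h0 ▸ measure_mono hsub) (zero_le)
  have hub : volume ((S ∩ closedBall y r) ∪ (T ∩ closedBall y r)) ≤ a + a := by
    rw [← vol_cb y n]
    exact measure_mono (by intro t ht; rcases ht with h|h <;> exact h.2)
  have hlt : a + a < volume (S ∩ closedBall y r) + volume (T ∩ closedBall y r) :=
    ENNReal.add_lt_add hn1 hn2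
  rw [← key, hz, add_zero] at hlt
  exact absurd hub (not_le.mpr hlt)

lemma tendsto_rn : Tendsto (fun n : ℕ => 1/((n:ℝ)+1)) atTop (𝓝[>] (0:ℝ)) := by
  rw [tendsto_nhdsWithin_iff]
  constructor
  · exact tendsto_one_div_add_atTop_nhds_zero_nat
  · exact Eventually.of_forall fun n => Set.mem_Ioi.mpr (by positivity)

lemma density_all (S : Set ℝ) (hS : MeasurableSet S) :
    ∀ᵐ y ∂(volume : Measure ℝ), (y ∈ S → HalfS S y) ∧ (y ∉ S → ¬ HalfS S y) := by
  filter_upwards [Besicovitch.ae_tendsto_measure_inter_div_of_measurableSet volume hS] with y hy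
  constructor
  · intro hmem
    rw [indicator_of_mem hmem] at hy
    simp only [Pi.one_apply] at hy
    have h2 := (hy.comp tendsto_rn).eventually (eventually_gt_nhds
      (by norm_num : (1/2 : ℝ≥0∞) < 1))
    filter_upwards [h2] with n hn
    simp only [Function.comp] at hn
    have hd0 : volume (closedBall y (1/((n:ℝ)+1))) ≠ 0 := by
      rw [vol_cb]; simp [inv_np_ne_zero n]
    have hdt : volume (closedBall y (1/((n:ℝ)+1))) ≠ ∞ := by
      rw [vol_cb]; exact ENNReal.add_ne_top.mpr ⟨inv_np_ne_top n, inv_np_ne_top n⟩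
    have h5 := (ENNReal.lt_div_iff_mul_lt (Or.inl hd0) (Or.inl hdt)).mp hn
    have h22 : (2:ℝ≥0∞)⁻¹ * 2 = 1 := ENNReal.inv_mul_cancel two_ne_zero ENNReal.ofNat_ne_top
    calc ((n : ℝ≥0∞) + 1)⁻¹ = 1/2 * (((n : ℝ≥0∞) + 1)⁻¹ + ((n : ℝ≥0∞) + 1)⁻¹) := by
          rw [← two_mul, ← mul_assoc, one_div, h22, one_mul]
      _ = 1/2 * volume (closedBall y (1/((n:ℝ)+1))) := by rw [vol_cb]
      _ < volume (S ∩ closedBall y (1/((n:ℝ)+1))) := h5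
  · intro hmem
    rw [indicator_of_notMem hmem] at hy
    have h2 := (hy.comp tendsto_rn).eventually (eventually_lt_nhds
      (by norm_num : (0 : ℝ≥0∞) < 1/2))
    intro hhalf
    obtain ⟨n, hn1, hn2⟩ := (hhalf.and h2).exists
    simp only [Function.comp] at hn2
    have hd0 : volume (closedBall y (1/((n:ℝ)+1))) ≠ 0 := by
      rw [vol_cb]; simp [inv_np_ne_zero n]
    have hdt : volume (closedBall y (1/((n:ℝ)+1))) ≠ ∞ := by
      rw [vol_cb]; exact ENNReal.add_ne_top.mpr ⟨inv_np_ne_top n, inv_np_ne_top n⟩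
    have h3 := (ENNReal.div_lt_iff (Or.inl hd0) (Or.inl hdt)).mp hn2
    have h22 : (2:ℝ≥0∞)⁻¹ * 2 = 1 := ENNReal.inv_mul_cancel two_ne_zero ENNReal.ofNat_ne_top
    have h4 : volume (S ∩ closedBall y (1/((n:ℝ)+1))) < ((n : ℝ≥0∞) + 1)⁻¹ := by
      calc volume (S ∩ closedBall y (1/((n:ℝ)+1))) < 1/2 * volume (closedBall y (1/((n:ℝ)+1))) := h3
        _ = ((n : ℝ≥0∞) + 1)⁻¹ := by
            rw [vol_cb, ← two_mul, ← mul_assoc, one_div, h22, one_mul]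
    exact absurd hn1 (not_lt.mpr h4.le)


/-! ### Basic defs and measurability -/

def cntb (b p q r : Bool) : ℕ :=
  (if p = b then 1 else 0) + (if q = b then 1 else 0) + (if r = b then 1 else 0)

def Nb (f : ℝ → ℝ → Bool) (b : Bool) (x : ℝ) : Set ℝ :=
  Icc 0 1 ∩ {t | f x t = b ∧ f t x = b}

variable {f : ℝ → ℝ → Bool} {b : Bool}

lemma meas_row (hf : Measurable (Function.uncurry f)) (x : ℝ) : Measurable (f x) :=
  hf.comp measurable_prodMk_left

lemma meas_col (hf : Measurable (Function.uncurry f)) (x : ℝ) : Measurable (fun t => f t x) :=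
  hf.comp (measurable_id.prodMk measurable_const)

lemma measNb (hf : Measurable (Function.uncurry f)) (b : Bool) (x : ℝ) :
    MeasurableSet (Nb f b x) := by
  refine measurableSet_Icc.inter ?_
  exact ((meas_row hf x) (measurableSet_singleton b)).inter
    ((meas_col hf x) (measurableSet_singleton b))

lemma Nb_subset (x : ℝ) : Nb f b x ⊆ Icc 0 1 := inter_subset_left

lemma measSet_fb (hf : Measurable (Function.uncurry f)) (b : Bool) {α : Type*}
    [MeasurableSpace α] {u v : α → ℝ} (hu : Measurable u) (hv : Measurable v) :
    MeasurableSet {q : α | f (u q) (v q) = b} :=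
  (hf.comp (hu.prodMk hv)) (measurableSet_singleton b)

lemma measSet_Nbmem (hf : Measurable (Function.uncurry f)) (b : Bool) {α : Type*}
    [MeasurableSpace α] {u v : α → ℝ} (hu : Measurable u) (hv : Measurable v) :
    MeasurableSet {q : α | v q ∈ Nb f b (u q)} := by
  have : {q : α | v q ∈ Nb f b (u q)} = (v ⁻¹' (Icc 0 1)) ∩
      ({q | f (u q) (v q) = b} ∩ {q | f (v q) (u q) = b}) := by
    ext q; simp [Nb, and_assoc]
  rw [this]
  exact (hv measurableSet_Icc).inter ((measSet_fb hf b hu hv).inter (measSet_fb hf b hv hu))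

lemma meas_section {α : Type*} [MeasurableSpace α] {S : Set (α × ℝ)} (hS : MeasurableSet S) :
    Measurable fun x : α => volume (Prod.mk x ⁻¹' S) :=
  measurable_measure_prodMk_left hS

lemma meas_volNb (hf : Measurable (Function.uncurry f)) (b : Bool) :
    Measurable fun x : ℝ => volume (Nb f b x) := by
  have h := meas_section (α := ℝ) (S := {q : ℝ × ℝ | q.2 ∈ Nb f b q.1})
    (measSet_Nbmem hf b measurable_fst measurable_snd)
  convert h using 2 <;> rfl

lemma meas_volNbInter (hf : Measurable (Function.uncurry f)) (b : Bool) :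
    Measurable fun p : ℝ × ℝ => volume (Nb f b p.1 ∩ Nb f b p.2) := by
  have h1 : MeasurableSet {q : (ℝ×ℝ) × ℝ | q.2 ∈ Nb f b q.1.1 ∧ q.2 ∈ Nb f b q.1.2} :=
    (measSet_Nbmem hf b (measurable_fst.comp measurable_fst) measurable_snd).inter
      (measSet_Nbmem hf b (measurable_snd.comp measurable_fst) measurable_snd)
  have h := meas_section h1
  convert h using 2 <;> rfl

lemma meas_volNbSymmDiff (hf : Measurable (Function.uncurry f)) (b : Bool) :
    Measurable fun p : ℝ × ℝ => volume ((Nb f b p.1) ∆ (Nb f b p.2)) := by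
  have hA := measSet_Nbmem hf b (α := (ℝ×ℝ)×ℝ) (measurable_fst.comp measurable_fst) measurable_snd
  have hB := measSet_Nbmem hf b (α := (ℝ×ℝ)×ℝ) (measurable_snd.comp measurable_fst) measurable_snd
  have h1 : MeasurableSet {q : (ℝ×ℝ) × ℝ |
      (q.2 ∈ Nb f b q.1.1 ∧ q.2 ∉ Nb f b q.1.2) ∨ (q.2 ∈ Nb f b q.1.2 ∧ q.2 ∉ Nb f b q.1.1)} :=
    ((hA.inter hB.compl).union (hB.inter hA.compl))
  have h := meas_section h1
  convert h using 2 <;> rfl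

lemma meas_Half (hf : Measurable (Function.uncurry f)) (b : Bool) :
    MeasurableSet {p : ℝ × ℝ | HalfS (Nb f b p.1) p.2} := by
  have hA : ∀ n : ℕ, MeasurableSet {p : ℝ × ℝ |
      ((n : ℝ≥0∞) + 1)⁻¹ < volume (Nb f b p.1 ∩ closedBall p.2 (1/((n:ℝ)+1)))} := by
    intro n
    have h1 : MeasurableSet {q : (ℝ×ℝ) × ℝ |
        q.2 ∈ Nb f b q.1.1 ∧ dist q.2 q.1.2 ≤ 1/((n:ℝ)+1)} := by
      refine (measSet_Nbmem hf b (measurable_fst.comp measurable_fst) measurable_snd).inter ?_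
      exact measurableSet_le (measurable_snd.dist (measurable_snd.comp measurable_fst))
        measurable_const
    have h := meas_section h1
    have h2 : (fun p : ℝ × ℝ => volume (Nb f b p.1 ∩ closedBall p.2 (1/((n:ℝ)+1)))) =
        fun p => volume (Prod.mk p ⁻¹' {q : (ℝ×ℝ) × ℝ |
          q.2 ∈ Nb f b q.1.1 ∧ dist q.2 q.1.2 ≤ 1/((n:ℝ)+1)}) := by
      funext p; rfl
    exact measurableSet_lt measurable_const (by rw [h2]; exact h)
  have : {p : ℝ × ℝ | HalfS (Nb f b p.1) p.2} =
      ⋃ m : ℕ, ⋂ n : ℕ, ⋂ (_ : m ≤ n), {p : ℝ × ℝ |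
        ((n : ℝ≥0∞) + 1)⁻¹ < volume (Nb f b p.1 ∩ closedBall p.2 (1/((n:ℝ)+1)))} := by
    ext p
    simp only [HalfS, eventually_atTop, mem_setOf_eq, mem_iUnion, mem_iInter]
  rw [this]
  exact MeasurableSet.iUnion fun m => MeasurableSet.iInter fun n =>
    MeasurableSet.iInter fun _ => hA n

lemma mono3 {A B : ℝ → ℝ → ℝ → Prop}
    (h : ∀ᵐ x ∂M, ∀ᵐ y ∂M, ∀ᵐ z ∂M, A x y z)
    (himp : ∀ x y z, A x y z → B x y z) :
    ∀ᵐ x ∂M, ∀ᵐ y ∂M, ∀ᵐ z ∂M, B x y z := by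
  filter_upwards [h] with x hx
  filter_upwards [hx] with y hy
  filter_upwards [hy] with z hz
  exact himp _ _ _ hz

lemma bool_eq_not {a c : Bool} (h : a ≠ c) : a = !c := by
  cases a <;> cases c <;> simp_all

lemma cnt_parity {b p q r : Bool} (h : cntb b p q r ≠ 0 ∧ cntb b p q r ≠ 2) :
    (q = b) ↔ ((p = b) ↔ (r = b)) := by
  revert h; rcases p <;> rcases q <;> rcases r <;> rcases b <;> decide


/-! ### Construction: parity (two classes) -/

lemma parityC (f : ℝ → ℝ → Bool) (b : Bool) (hf : Measurable (Function.uncurry f))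
    (hodd : ∀ᵐ x ∂M, ∀ᵐ y ∂M, ∀ᵐ z ∂M,
      cntb b (f x y) (f y z) (f x z) ≠ 0 ∧ cntb b (f x y) (f y z) (f x z) ≠ 2) :
    ∃ g : ℝ → ℝ → Bool, Measurable (Function.uncurry g) ∧ (∀ x y, g x y = g y x) ∧
      (∀ᵐ p ∂V2, g p.1 p.2 = f p.1 p.2) ∧
      ∀ x y z, cntb b (g x y) (g y z) (g x z) ≠ 0 ∧ cntb b (g x y) (g y z) (g x z) ≠ 2 := by
  classical
  haveI := ae_neBot'
  obtain ⟨a, ha⟩ := hodd.exists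
  set A : Set ℝ := {y | f a y = b} with hA
  have hAmeas : MeasurableSet A := (meas_row hf a) (measurableSet_singleton b)
  set g : ℝ → ℝ → Bool := fun x y => if (x ∈ A ↔ y ∈ A) then b else !b with hg
  have hCmeas : MeasurableSet {p : ℝ × ℝ | p.1 ∈ A ↔ p.2 ∈ A} := by
    have : {p : ℝ × ℝ | p.1 ∈ A ↔ p.2 ∈ A} = (A ×ˢ A) ∪ (Aᶜ ×ˢ Aᶜ) := by
      ext p
      by_cases h1 : p.1 ∈ A <;> by_cases h2 : p.2 ∈ A <;> simp [h1, h2]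
    rw [this]
    exact ((hAmeas.prod hAmeas).union (hAmeas.compl.prod hAmeas.compl))
  have hgmeas : Measurable (Function.uncurry g) := by
    have : Function.uncurry g = fun p : ℝ × ℝ => if (p.1 ∈ A ↔ p.2 ∈ A) then b else !b := rfl
    rw [this]
    exact Measurable.ite hCmeas measurable_const measurable_const
  refine ⟨g, hgmeas, ?_, ?_, ?_⟩
  · intro x y
    by_cases h1 : x ∈ A <;> by_cases h2 : y ∈ A <;> simp [hg, h1, h2]
  · refine (Measure.ae_prod_iff_ae_ae (p := fun p : ℝ × ℝ => g p.1 p.2 = f p.1 p.2)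
      (measurableSet_eq_fun hgmeas hf)).mpr ?_
    filter_upwards [ha] with x hx
    filter_upwards [hx] with y hy
    have hkey : (f x y = b) ↔ ((x ∈ A) ↔ (y ∈ A)) := by
      simp only [hA, mem_setOf_eq]
      exact cnt_parity hy
    by_cases hiff : (x ∈ A) ↔ (y ∈ A)
    · simp only [hg, if_pos hiff]
      exact (hkey.mpr hiff).symm
    · simp only [hg, if_neg hiff]
      exact (bool_eq_not (fun hc => hiff (hkey.mp hc))).symm
  · intro x y z
    rcases b <;> by_cases h1 : x ∈ A <;> by_cases h2 : y ∈ A <;> by_cases h3 : z ∈ A <;>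
      simp [hg, h1, h2, h3, cntb]


/-! ### a.e. helpers -/

lemma vol_null_of_ae {Q : ℝ → Prop} (h : ∀ᵐ t ∂M, Q t) {E : Set ℝ}
    (hE : E ⊆ {t | ¬ Q t}) (hE2 : E ⊆ Icc 0 1) : volume E = 0 := by
  have h0 : M {t | ¬ Q t} = 0 := ae_iff.mp h
  rw [Measure.restrict_apply' measurableSet_Icc] at h0
  exact measure_mono_null (subset_inter hE hE2) h0

lemma sym_pair (hf : Measurable (Function.uncurry f))
    (hsymm : ∀ᵐ p ∂V2, f p.1 p.2 = f p.2 p.1) :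
    ∀ᵐ p ∂V2, (∀ᵐ t ∂M, f p.1 t = f t p.1) ∧ (∀ᵐ t ∂M, f p.2 t = f t p.2) := by
  have hsymI := Measure.ae_ae_of_ae_prod hsymm
  have hG : ∀ᵐ x ∂M, x ∈ {x : ℝ | ∀ᵐ t ∂M, f x t = f t x} := hsymI
  exact prod_conull hG

/-! ### Construction: cluster -/

def clCond (f : ℝ → ℝ → Bool) (b : Bool) (x y : ℝ) : Prop :=
  volume ((Nb f b x) ∆ (Nb f b y)) = 0 ∧ volume (Nb f b x) ≠ 0 ∧ volume (Nb f b y) ≠ 0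

open scoped Classical in
noncomputable def clG (f : ℝ → ℝ → Bool) (b : Bool) (x y : ℝ) : Bool :=
  if clCond f b x y then b else !b

lemma clG_pos {x y : ℝ} (h : clCond f b x y) : clG f b x y = b := by
  simp [clG, h]

lemma clG_neg {x y : ℝ} (h : ¬ clCond f b x y) : clG f b x y = !b := by
  simp [clG, h]

lemma clCond_symm {x y : ℝ} (h : clCond f b x y) : clCond f b y x := by
  obtain ⟨h1, h2, h3⟩ := h
  exact ⟨by rwa [symmDiff_comm], h3, h2⟩

lemma clCond_trans {u v w : ℝ} (h : clCond f b u v) (h' : clCond f b v w) :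
    clCond f b u w := by
  obtain ⟨h1, h2, h3⟩ := h
  obtain ⟨h4, h5, h6⟩ := h'
  refine ⟨?_, h2, h6⟩
  have hsub : (Nb f b u) ∆ (Nb f b w) ⊆ ((Nb f b u) ∆ (Nb f b v)) ∪ ((Nb f b v) ∆ (Nb f b w)) :=
    symmDiff_triangle _ _ _
  exact le_antisymm (le_trans (measure_mono hsub)
    (le_trans (measure_union_le _ _) (by rw [h1, h4, add_zero]))) (zero_le)

lemma clusterC (f : ℝ → ℝ → Bool) (b : Bool) (hf : Measurable (Function.uncurry f))
    (hsymm : ∀ᵐ p ∂V2, f p.1 p.2 = f p.2 p.1)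
    (haeA : ∀ᵐ p ∂V2, ∀ᵐ z ∂M, cntb b (f p.1 p.2) (f p.2 z) (f p.1 z) ≠ 2)
    (haeB : ∀ᵐ p ∂V2, ∀ᵐ t ∂M, cntb b (f p.1 t) (f t p.2) (f p.1 p.2) ≠ 2) :
    ∃ g : ℝ → ℝ → Bool, Measurable (Function.uncurry g) ∧ (∀ x y, g x y = g y x) ∧
      (∀ᵐ p ∂V2, g p.1 p.2 = f p.1 p.2) ∧
      ∀ x y z, cntb b (g x y) (g y z) (g x z) ≠ 2 := by
  classical
  have hcmeas : MeasurableSet {p : ℝ × ℝ | clCond f b p.1 p.2} := by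
    have h1 := meas_volNbSymmDiff hf b
    have h2 := meas_volNb hf b
    have : {p : ℝ × ℝ | clCond f b p.1 p.2} =
        ((fun p : ℝ × ℝ => volume ((Nb f b p.1) ∆ (Nb f b p.2))) ⁻¹' {0}) ∩
        (((fun p : ℝ × ℝ => volume (Nb f b p.1)) ⁻¹' {0})ᶜ ∩
         ((fun p : ℝ × ℝ => volume (Nb f b p.2)) ⁻¹' {0})ᶜ) := by
      ext p; simp [clCond]
    rw [this]
    exact (h1 (measurableSet_singleton 0)).inter
      (((h2.comp measurable_fst) (measurableSet_singleton 0)).compl.inter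
       ((h2.comp measurable_snd) (measurableSet_singleton 0)).compl)
  have hgmeas : Measurable (Function.uncurry (clG f b)) := by
    have : Function.uncurry (clG f b) = fun p : ℝ × ℝ =>
        if clCond f b p.1 p.2 then b else !b := by
      funext p
      simp [Function.uncurry, clG]
    rw [this]
    exact Measurable.ite hcmeas measurable_const measurable_const
  refine ⟨clG f b, hgmeas, ?_, ?_, ?_⟩
  · intro x y
    by_cases h : clCond f b x y
    · rw [clG_pos h, clG_pos (clCond_symm h)]
    · rw [clG_neg h, clG_neg (fun h' => h (clCond_symm h'))]
  · -- a.e. equality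
    have hx1 : ∀ᵐ p ∂V2, f p.1 p.2 = b → volume ((Nb f b p.1) ∆ (Nb f b p.2)) = 0 := by
      filter_upwards [haeA, sym_pair hf hsymm] with p hA hsym hb
      refine vol_null_of_ae (Q := fun t => (cntb b (f p.1 p.2) (f p.2 t) (f p.1 t) ≠ 2)
        ∧ f p.1 t = f t p.1 ∧ f p.2 t = f t p.2) (hA.and (hsym.1.and hsym.2)) ?_ ?_
      · intro t ht hQ
        obtain ⟨hQ1, hQ2, hQ3⟩ := hQ
        rw [hb] at hQ1
        rcases Set.mem_symmDiff.mp ht with ⟨ht1, ht2⟩ | ⟨ht1, ht2⟩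
        · obtain ⟨hI, he1, he2⟩ := ht1
          rw [he1] at hQ1
          have hyt : f p.2 t = b := by revert hQ1; rcases b <;> rcases hq : f p.2 t <;> decide
          exact ht2 ⟨hI, hyt, by rw [← hQ3, hyt]⟩
        · obtain ⟨hI, he1, he2⟩ := ht1
          rw [he1] at hQ1
          have hxt : f p.1 t = b := by revert hQ1; rcases b <;> rcases hq : f p.1 t <;> decide
          exact ht2 ⟨hI, hxt, by rw [← hQ2, hxt]⟩
      · exact fun t ht => (symmDiff_le_sup (a := Nb f b p.1) (b := Nb f b p.2) ht).elim
          (fun h => Nb_subset _ h) (fun h => Nb_subset _ h)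
    have h2I : ∀ᵐ x ∂M, ∀ᵐ y ∂M, (f x y = b → volume (Nb f b x) ≠ 0) := by
      have hsymI := Measure.ae_ae_of_ae_prod hsymm
      filter_upwards [hsymI] with x hx
      by_cases hDx : volume (Nb f b x) = 0
      · have hnull : M {y | f x y = b} = 0 := by
          rw [Measure.restrict_apply' measurableSet_Icc]
          have hsub : {y | f x y = b} ∩ Icc 0 1 ⊆
              Nb f b x ∪ ({y | ¬ f x y = f y x} ∩ Icc 0 1) := by
            rintro y ⟨hy1, hy2⟩
            by_cases hs : f x y = f y x
            · exact Or.inl ⟨hy2, hy1, by rw [← hs, hy1]⟩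
            · exact Or.inr ⟨hs, hy2⟩
          refine measure_mono_null hsub ?_
          have h0 : M {y | ¬ f x y = f y x} = 0 := ae_iff.mp hx
          rw [Measure.restrict_apply' measurableSet_Icc] at h0
          exact le_antisymm (le_trans (measure_union_le _ _)
            (by rw [hDx, h0, add_zero])) (zero_le)
        have : ∀ᵐ y ∂M, ¬ f x y = b := ae_iff.mpr (by simpa using hnull)
        filter_upwards [this] with y hy hb
        exact absurd hb hy
      · exact Eventually.of_forall fun y _ => hDx
    have hmeas2 : MeasurableSet {p : ℝ × ℝ | f p.1 p.2 = b → volume (Nb f b p.1) ≠ 0} := by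
      have : {p : ℝ × ℝ | f p.1 p.2 = b → volume (Nb f b p.1) ≠ 0} =
          {p : ℝ × ℝ | f p.1 p.2 = b}ᶜ ∪
          (((fun p : ℝ × ℝ => volume (Nb f b p.1)) ⁻¹' {0})ᶜ) := by
        ext p; by_cases h : f p.1 p.2 = b <;> simp [h]
      rw [this]
      exact (measSet_fb hf b measurable_fst measurable_snd).compl.union
        (((meas_volNb hf b).comp measurable_fst) (measurableSet_singleton 0)).compl
    have hx2a : ∀ᵐ p ∂V2, f p.1 p.2 = b → volume (Nb f b p.1) ≠ 0 :=
      (Measure.ae_prod_iff_ae_ae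
        (p := fun p : ℝ × ℝ => f p.1 p.2 = b → volume (Nb f b p.1) ≠ 0) hmeas2).mpr h2I
    have hx2b : ∀ᵐ p ∂V2, f p.1 p.2 = b → volume (Nb f b p.2) ≠ 0 := by
      filter_upwards [swap_ae hx2a, hsymm] with p hsw hs hb
      exact hsw (hs.symm.trans hb)
    have hx3 : ∀ᵐ p ∂V2, f p.1 p.2 ≠ b → ¬ clCond f b p.1 p.2 := by
      filter_upwards [haeB] with p hB hnb hc
      obtain ⟨hΔ, hDx, _⟩ := hc
      have hnull : volume (Nb f b p.1 ∩ Nb f b p.2) = 0 := by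
        refine vol_null_of_ae
          (Q := fun t => cntb b (f p.1 t) (f t p.2) (f p.1 p.2) ≠ 2) hB ?_ ?_
        · rintro t ⟨⟨hI1, ha1, ha2⟩, ⟨hI2, hb1, hb2⟩⟩
          simp only [mem_setOf_eq, not_not]
          rw [ha1, hb2]
          revert hnb; rcases b <;> rcases hv : f p.1 p.2 <;> decide
        · exact fun t ht => Nb_subset _ ht.1
      have : volume (Nb f b p.1) = 0 := by
        have hsub : Nb f b p.1 ⊆ (Nb f b p.1 ∩ Nb f b p.2) ∪ ((Nb f b p.1) ∆ (Nb f b p.2)) := by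
          intro t ht
          by_cases h2 : t ∈ Nb f b p.2
          · exact Or.inl ⟨ht, h2⟩
          · exact Or.inr (Set.mem_symmDiff.mpr (Or.inl ⟨ht, h2⟩))
        exact le_antisymm (le_trans (measure_mono hsub)
          (le_trans (measure_union_le _ _) (by rw [hnull, hΔ, add_zero]))) (zero_le)
      exact hDx this
    filter_upwards [hx1, hx2a, hx2b, hx3] with p h1 h2a h2b h3
    by_cases hb : f p.1 p.2 = b
    · rw [clG_pos ⟨h1 hb, h2a hb, h2b hb⟩, hb]
    · rw [clG_neg (h3 hb)]
      exact (bool_eq_not hb).symm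
  · intro x y z
    by_cases c1 : clCond f b x y <;> by_cases c2 : clCond f b y z <;>
      by_cases c3 : clCond f b x z
    all_goals try exact absurd (clCond_trans c1 c2) c3
    all_goals try exact absurd (clCond_trans (clCond_symm c1) c3) c2
    all_goals try exact absurd (clCond_trans c3 (clCond_symm c2)) c1
    all_goals first
      | (rw [clG_pos c1, clG_pos c2, clG_pos c3]; rcases b <;> decide)
      | (rw [clG_pos c1, clG_neg c2, clG_neg c3]; rcases b <;> decide)
      | (rw [clG_neg c1, clG_pos c2, clG_neg c3]; rcases b <;> decide)
      | (rw [clG_neg c1, clG_neg c2, clG_pos c3]; rcases b <;> decide)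
      | (rw [clG_neg c1, clG_neg c2, clG_neg c3]; rcases b <;> decide)


/-! ### Construction: triangle-free -/

def tfCond (f : ℝ → ℝ → Bool) (b : Bool) (x y : ℝ) : Prop :=
  HalfS (Nb f b x) y ∧ HalfS (Nb f b y) x ∧ volume (Nb f b x ∩ Nb f b y) = 0

open scoped Classical in
noncomputable def tfG (f : ℝ → ℝ → Bool) (b : Bool) (x y : ℝ) : Bool :=
  if tfCond f b x y then b else !b

lemma tfG_pos {x y : ℝ} (h : tfCond f b x y) : tfG f b x y = b := by simp [tfG, h]

lemma tfG_neg {x y : ℝ} (h : ¬ tfCond f b x y) : tfG f b x y = !b := by simp [tfG, h]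

lemma tfCond_symm {x y : ℝ} (h : tfCond f b x y) : tfCond f b y x :=
  ⟨h.2.1, h.1, by rw [inter_comm]; exact h.2.2⟩

lemma cnt3 {b p q r : Bool} (h : cntb b p q r = 3) : p = b ∧ q = b ∧ r = b := by
  revert h; rcases b <;> rcases p <;> rcases q <;> rcases r <;> decide

lemma triangleC (f : ℝ → ℝ → Bool) (b : Bool) (hf : Measurable (Function.uncurry f))
    (hsymm : ∀ᵐ p ∂V2, f p.1 p.2 = f p.2 p.1)
    (haeT : ∀ᵐ p ∂V2, ∀ᵐ z ∂M, cntb b (f p.1 p.2) (f p.2 z) (f p.1 z) ≠ 3) :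
    ∃ g : ℝ → ℝ → Bool, Measurable (Function.uncurry g) ∧ (∀ x y, g x y = g y x) ∧
      (∀ᵐ p ∂V2, g p.1 p.2 = f p.1 p.2) ∧
      ∀ x y z, cntb b (g x y) (g y z) (g x z) ≠ 3 := by
  classical
  have hHalf := meas_Half hf b
  have hMem := measSet_Nbmem hf b (α := ℝ × ℝ) measurable_fst measurable_snd
  have hcmeas : MeasurableSet {p : ℝ × ℝ | tfCond f b p.1 p.2} := by
    have h3 : MeasurableSet {p : ℝ × ℝ | HalfS (Nb f b p.2) p.1} := by
      have : {p : ℝ × ℝ | HalfS (Nb f b p.2) p.1} =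
          Prod.swap ⁻¹' {p : ℝ × ℝ | HalfS (Nb f b p.1) p.2} := by
        ext p; rfl
      rw [this]
      exact measurable_swap hHalf
    have h4 : MeasurableSet {p : ℝ × ℝ | volume (Nb f b p.1 ∩ Nb f b p.2) = 0} :=
      (meas_volNbInter hf b) (measurableSet_singleton 0)
    exact (hHalf.inter (h3.inter h4))
  have hgmeas : Measurable (Function.uncurry (tfG f b)) := by
    have : Function.uncurry (tfG f b) = fun p : ℝ × ℝ =>
        if tfCond f b p.1 p.2 then b else !b := by
      funext p; simp [Function.uncurry, tfG]
    rw [this]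
    exact Measurable.ite hcmeas measurable_const measurable_const
  refine ⟨tfG f b, hgmeas, ?_, ?_, ?_⟩
  · intro x y
    by_cases h : tfCond f b x y
    · rw [tfG_pos h, tfG_pos (tfCond_symm h)]
    · rw [tfG_neg h, tfG_neg (fun h' => h (tfCond_symm h'))]
  · -- a.e. equality
    have hdensI : ∀ᵐ x ∂M, ∀ᵐ y ∂M,
        (y ∈ Nb f b x → HalfS (Nb f b x) y) ∧ (y ∉ Nb f b x → ¬ HalfS (Nb f b x) y) := by
      refine Eventually.of_forall fun x => ?_
      exact ae_restrict_of_ae (density_all (Nb f b x) (measNb hf b x))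
    have hdmeas : MeasurableSet {p : ℝ × ℝ |
        (p.2 ∈ Nb f b p.1 → HalfS (Nb f b p.1) p.2) ∧
        (p.2 ∉ Nb f b p.1 → ¬ HalfS (Nb f b p.1) p.2)} := by
      have : {p : ℝ × ℝ |
          (p.2 ∈ Nb f b p.1 → HalfS (Nb f b p.1) p.2) ∧
          (p.2 ∉ Nb f b p.1 → ¬ HalfS (Nb f b p.1) p.2)} =
          ({p : ℝ × ℝ | p.2 ∈ Nb f b p.1}ᶜ ∪ {p : ℝ × ℝ | HalfS (Nb f b p.1) p.2}) ∩
          ({p : ℝ × ℝ | p.2 ∈ Nb f b p.1} ∪ {p : ℝ × ℝ | HalfS (Nb f b p.1) p.2}ᶜ) := by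
        ext p
        by_cases h1 : p.2 ∈ Nb f b p.1 <;> by_cases h2 : HalfS (Nb f b p.1) p.2 <;>
          simp [h1, h2]
      rw [this]
      exact ((hMem.compl.union hHalf).inter (hMem.union hHalf.compl))
    have hdens : ∀ᵐ p ∂V2,
        (p.2 ∈ Nb f b p.1 → HalfS (Nb f b p.1) p.2) ∧
        (p.2 ∉ Nb f b p.1 → ¬ HalfS (Nb f b p.1) p.2) :=
      (Measure.ae_prod_iff_ae_ae (p := fun p : ℝ × ℝ =>
        (p.2 ∈ Nb f b p.1 → HalfS (Nb f b p.1) p.2) ∧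
        (p.2 ∉ Nb f b p.1 → ¬ HalfS (Nb f b p.1) p.2)) hdmeas).mpr hdensI
    have hswap := swap_ae hdens
    have hvolz : ∀ᵐ p ∂V2, f p.1 p.2 = b → volume (Nb f b p.1 ∩ Nb f b p.2) = 0 := by
      filter_upwards [haeT] with p hT hb
      refine vol_null_of_ae
        (Q := fun z => cntb b (f p.1 p.2) (f p.2 z) (f p.1 z) ≠ 3) hT ?_ ?_
      · rintro t ⟨⟨hI1, ha1, ha2⟩, ⟨hI2, hb1, hb2⟩⟩
        simp only [mem_setOf_eq, not_not]
        rw [hb, ha1, hb1]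
        rcases b <;> decide
      · exact fun t ht => Nb_subset _ ht.1
    filter_upwards [mem_Icc_ae, hsymm, hdens, hswap, hvolz] with p h0 hs hd hw hv
    by_cases hb : f p.1 p.2 = b
    · have hmem1 : p.2 ∈ Nb f b p.1 := ⟨h0.2, hb, hs.symm.trans hb⟩
      have hmem2 : p.1 ∈ Nb f b p.2 := ⟨h0.1, hs.symm.trans hb, hb⟩
      rw [tfG_pos ⟨hd.1 hmem1, hw.1 hmem2, hv hb⟩, hb]
    · have hnm : p.2 ∉ Nb f b p.1 := fun hm => hb hm.2.1
      have : ¬ tfCond f b p.1 p.2 := fun hc => (hd.2 hnm) hc.1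
      rw [tfG_neg this]
      exact (bool_eq_not hb).symm
  · intro x y z h3
    obtain ⟨e1, e2, e3⟩ := cnt3 h3
    have c1 : tfCond f b x y := by
      by_contra hc
      rw [tfG_neg hc] at e1
      revert e1; rcases b <;> decide
    have c2 : tfCond f b y z := by
      by_contra hc
      rw [tfG_neg hc] at e2
      revert e2; rcases b <;> decide
    have c3 : tfCond f b x z := by
      by_contra hc
      rw [tfG_neg hc] at e3
      revert e3; rcases b <;> decide
    exact half_half (measNb hf b y) c3.1 c2.1 c1.2.2


/-! ### Degenerate cases -/

lemma exists_in_of_ae {s : Set ℝ} (hs : M s ≠ 0) {Q : ℝ → Prop}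
    (hQ : ∀ᵐ y ∂M, Q y) : ∃ y, y ∈ s ∧ Q y := by
  have h0 : M {y | ¬ Q y} = 0 := ae_iff.mp hQ
  have hsub : s ⊆ (s ∩ {y | Q y}) ∪ {y | ¬ Q y} := by
    intro y hy
    by_cases h : Q y
    · exact Or.inl ⟨hy, h⟩
    · exact Or.inr h
  have : M (s ∩ {y | Q y}) ≠ 0 := by
    intro hz
    exact hs (le_antisymm (le_trans (measure_mono hsub)
      (le_trans (measure_union_le _ _) (by rw [hz, h0, add_zero]))) (zero_le))
  obtain ⟨y, hy⟩ := nonempty_of_measure_ne_zero this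
  exact ⟨y, hy.1, hy.2⟩

lemma row_null_ae {x : ℝ} (hx : ∀ᵐ t ∂M, f x t = f t x)
    (hDx : volume (Nb f b x) = 0) : ∀ᵐ y ∂M, f x y = !b := by
  have hnull : M {y | f x y = b} = 0 := by
    rw [Measure.restrict_apply' measurableSet_Icc]
    have hsub : {y | f x y = b} ∩ Icc 0 1 ⊆
        Nb f b x ∪ ({y | ¬ f x y = f y x} ∩ Icc 0 1) := by
      rintro y ⟨hy1, hy2⟩
      by_cases hs : f x y = f y x
      · exact Or.inl ⟨hy2, hy1, by rw [← hs, hy1]⟩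
      · exact Or.inr ⟨hs, hy2⟩
    refine measure_mono_null hsub ?_
    have h0 : M {y | ¬ f x y = f y x} = 0 := ae_iff.mp hx
    rw [Measure.restrict_apply' measurableSet_Icc] at h0
    exact le_antisymm (le_trans (measure_union_le _ _)
      (by rw [hDx, h0, add_zero])) (zero_le)
  have : ∀ᵐ y ∂M, ¬ f x y = b := ae_iff.mpr (by simpa using hnull)
  filter_upwards [this] with y hy
  exact bool_eq_not hy

lemma LA (f : ℝ → ℝ → Bool) (b : Bool) (hf : Measurable (Function.uncurry f))
    (hsymm : ∀ᵐ p ∂V2, f p.1 p.2 = f p.2 p.1)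
    (hae2 : ∀ᵐ x ∂M, ∀ᵐ y ∂M, ∀ᵐ z ∂M, cntb b (f x y) (f y z) (f x z) < 2) :
    ∀ᵐ p ∂V2, f p.1 p.2 = !b := by
  have hsymI := Measure.ae_ae_of_ae_prod hsymm
  have hI : ∀ᵐ x ∂M, ∀ᵐ y ∂M, f x y = !b := by
    filter_upwards [hsymI, hae2] with x hx hx2
    have hDx : volume (Nb f b x) = 0 := by
      by_contra hD
      have hM : M (Nb f b x) ≠ 0 := by
        rwa [Measure.restrict_apply' measurableSet_Icc,
          inter_eq_self_of_subset_left (Nb_subset x)]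
      obtain ⟨y, hyA, hy2⟩ := exists_in_of_ae hM hx2
      obtain ⟨z, hzA, hz2⟩ := exists_in_of_ae hM hy2
      have h1 : f x y = b := hyA.2.1
      have h2 : f x z = b := hzA.2.1
      revert hz2
      rw [h1, h2]
      rcases b <;> rcases hv : f y z <;> decide
    exact row_null_ae hx hDx
  exact (Measure.ae_prod_iff_ae_ae (p := fun p : ℝ × ℝ => f p.1 p.2 = !b)
    (measSet_fb hf (!b) measurable_fst measurable_snd)).mpr hI

lemma LB (f : ℝ → ℝ → Bool) (hf : Measurable (Function.uncurry f))
    (heq : ∀ᵐ x ∂M, ∀ᵐ y ∂M, ∀ᵐ z ∂M, f x y = f y z ∧ f y z = f x z) :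
    (∀ᵐ p ∂V2, f p.1 p.2 = false) ∨ (∀ᵐ p ∂V2, f p.1 p.2 = true) := by
  have := isProb
  have h1 : ∀ᵐ x ∂M, ∀ᵐ y ∂M, ∀ᵐ z ∂M, f x y = f x z :=
    mono3 heq fun x y z h => h.1.trans h.2
  have h2 : ∀ᵐ x ∂M, ∀ᵐ y ∂M, ∀ᵐ z ∂M, f x y = f y z :=
    mono3 heq fun x y z h => h.1
  set hrow : ℝ → ℝ≥0∞ := fun x => M {y | f x y = true} with hrowdef
  have hrmeas : Measurable hrow := by
    have h := measurable_measure_prodMk_left (ν := M)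
      (measSet_fb hf true (α := ℝ × ℝ) measurable_fst measurable_snd)
    convert h using 2 <;> rfl
  have hrow1 : ∀ x, hrow x ≤ 1 := fun x => le_trans (measure_mono (subset_univ _)) (by simp)
  have step1 : ∀ᵐ x ∂M, hrow x = 0 ∨ hrow x = 1 := by
    filter_upwards [h1] with x hx1
    by_cases h0 : hrow x = 0
    · exact Or.inl h0
    · refine Or.inr ?_
      obtain ⟨y, hyA, hy2⟩ := exists_in_of_ae h0 hx1
      have hall : ∀ᵐ z ∂M, f x z = true := by
        filter_upwards [hy2] with z hz
        rw [← hz]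
        exact hyA
      have hcnull : M {z | ¬ f x z = true} = 0 := ae_iff.mp hall
      have : (1:ℝ≥0∞) ≤ hrow x := by
        have huniv : (univ : Set ℝ) ⊆ {y | f x y = true} ∪ {z | ¬ f x z = true} := by
          intro t _
          by_cases h : f x t = true
          · exact Or.inl h
          · exact Or.inr h
        calc (1:ℝ≥0∞) = M univ := by simp
          _ ≤ hrow x + M {z | ¬ f x z = true} := le_trans (measure_mono huniv)
              (measure_union_le _ _)
          _ = hrow x := by rw [hcnull, add_zero]
      exact le_antisymm (hrow1 x) this
  by_cases hA0 : M {x | hrow x = 1} = 0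
  · left
    have hI : ∀ᵐ x ∂M, ∀ᵐ y ∂M, f x y = false := by
      have hnotA : ∀ᵐ x ∂M, ¬ hrow x = 1 := ae_iff.mpr (by simpa using hA0)
      filter_upwards [step1, hnotA] with x hx hxA
      have h0 : hrow x = 0 := hx.resolve_right hxA
      have hseteq : {y | ¬¬ (f x y = true)} = {y | f x y = true} := by ext y; simp
      have : ∀ᵐ y ∂M, ¬ f x y = true := ae_iff.mpr (by rw [hseteq]; exact h0)
      filter_upwards [this] with y hy
      simpa using hy
    exact (Measure.ae_prod_iff_ae_ae (p := fun p : ℝ × ℝ => f p.1 p.2 = false)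
      (measSet_fb hf false measurable_fst measurable_snd)).mpr hI
  · right
    obtain ⟨x₀, hx₀A, hx₀⟩ := exists_in_of_ae hA0 h2
    have hrowfull : ∀ᵐ y ∂M, f x₀ y = true := by
      have hx1 : hrow x₀ = 1 := hx₀A
      have hcompl : M {y | f x₀ y = true}ᶜ = 0 := by
        have hm : MeasurableSet {y | f x₀ y = true} := (meas_row hf x₀) (measurableSet_singleton true)
        rw [measure_compl hm (((hrow1 x₀).trans_lt ENNReal.one_lt_top).ne)]
        rw [show M {y | f x₀ y = true} = 1 from hx1]
        simp
      exact ae_iff.mpr (by simpa [compl_setOf] using hcompl)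
    have hI : ∀ᵐ y ∂M, ∀ᵐ z ∂M, f y z = true := by
      filter_upwards [hrowfull, hx₀] with y hy hy2
      filter_upwards [hy2] with z hz
      rw [← hz]
      exact hy
    exact (Measure.ae_prod_iff_ae_ae (p := fun p : ℝ × ℝ => f p.1 p.2 = true)
      (measSet_fb hf true measurable_fst measurable_snd)).mpr hI

lemma LC (f : ℝ → ℝ → Bool) (hf : Measurable (Function.uncurry f))
    (hsymm : ∀ᵐ p ∂V2, f p.1 p.2 = f p.2 p.1)
    (h3 : ∀ᵐ x ∂M, ∀ᵐ y ∂M, ∀ᵐ z ∂M, ¬(f x y = true ∧ f y z = true ∧ f x z = true))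
    (h0 : ∀ᵐ x ∂M, ∀ᵐ y ∂M, ∀ᵐ z ∂M, ¬(f x y = false ∧ f y z = false ∧ f x z = false)) :
    False := by
  have := isProb
  haveI := ae_neBot'
  have hsymI := Measure.ae_ae_of_ae_prod hsymm
  obtain ⟨x, hxs, hx3, hx0⟩ := (hsymI.and (h3.and h0)).exists
  -- class of a point u w.r.t. value c
  have key : ∀ c : Bool, (∀ᵐ y ∂M, ∀ᵐ z ∂M, ¬(f x y = c ∧ f y z = c ∧ f x z = c)) →
      (∀ᵐ y ∂M, ∀ᵐ z ∂M, ∀ᵐ w ∂M, ¬(f y z = !c ∧ f z w = !c ∧ f y w = !c)) →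
      M (Nb f c x) = 0 := by
    intro c hxc hglob
    have QA : ∀ᵐ y ∂M, ∀ᵐ z ∂M, (y ∈ Nb f c x → z ∈ Nb f c x → f y z = !c) := by
      filter_upwards [hxc] with y hy
      filter_upwards [hy] with z hz
      intro hyA hzA
      exact bool_eq_not fun hc => hz ⟨hyA.2.1, hc, hzA.2.1⟩
    have trip : ∀ᵐ y ∂M, ∀ᵐ z ∂M, ∀ᵐ w ∂M,
        ((y ∈ Nb f c x → z ∈ Nb f c x → f y z = !c) ∧
         (z ∈ Nb f c x → w ∈ Nb f c x → f z w = !c) ∧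
         (y ∈ Nb f c x → w ∈ Nb f c x → f y w = !c) ∧
         ¬(f y z = !c ∧ f z w = !c ∧ f y w = !c)) := by
      have c1 : ∀ᵐ y ∂M, ∀ᵐ z ∂M, ∀ᵐ w ∂M,
          (y ∈ Nb f c x → z ∈ Nb f c x → f y z = !c) := by
        filter_upwards [QA] with y hy
        filter_upwards [hy] with z hz
        exact Eventually.of_forall fun w => hz
      have c2 : ∀ᵐ y ∂M, ∀ᵐ z ∂M, ∀ᵐ w ∂M,
          (z ∈ Nb f c x → w ∈ Nb f c x → f z w = !c) :=
        Eventually.of_forall fun y => QA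
      have c3 : ∀ᵐ y ∂M, ∀ᵐ z ∂M, ∀ᵐ w ∂M,
          (y ∈ Nb f c x → w ∈ Nb f c x → f y w = !c) := by
        filter_upwards [QA] with y hy
        exact Eventually.of_forall fun z => hy
      filter_upwards [c1, c2, c3, hglob] with y k1 k2 k3 k4
      filter_upwards [k1, k2, k3, k4] with z l1 l2 l3 l4
      filter_upwards [l1, l2, l3, l4] with w m1 m2 m3 m4
      exact ⟨m1, m2, m3, m4⟩
    by_contra hA
    obtain ⟨y, hyA, hy⟩ := exists_in_of_ae hA trip
    obtain ⟨z, hzA, hz⟩ := exists_in_of_ae hA hy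
    obtain ⟨w, hwA, hw⟩ := exists_in_of_ae hA hz
    exact hw.2.2.2 ⟨hw.1 hyA hzA, hw.2.1 hzA hwA, hw.2.2.1 hyA hwA⟩
  have hMA : M (Nb f true x) = 0 := by
    refine key true hx3 ?_
    exact mono3 h0 fun y z w h hc => h ⟨hc.1, hc.2.1, hc.2.2⟩
  have hMB : M (Nb f false x) = 0 := by
    refine key false hx0 ?_
    exact mono3 h3 fun y z w h hc => h ⟨hc.1, hc.2.1, hc.2.2⟩
  have hsymnull : M {t | ¬ f x t = f t x} = 0 := ae_iff.mp hxs
  have hIccc : M (Icc (0:ℝ) 1)ᶜ = 0 := by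
    rw [Measure.restrict_apply' measurableSet_Icc]
    simp
  have hcover : (univ : Set ℝ) ⊆
      Nb f true x ∪ (Nb f false x ∪ ({t | ¬ f x t = f t x} ∪ (Icc (0:ℝ) 1)ᶜ)) := by
    intro t _
    by_cases hI : t ∈ Icc (0:ℝ) 1
    · by_cases hs : f x t = f t x
      · rcases hv : f x t
        · exact Or.inr (Or.inl ⟨hI, hv, by rw [← hs, hv]⟩)
        · exact Or.inl ⟨hI, hv, by rw [← hs, hv]⟩
      · exact Or.inr (Or.inr (Or.inl hs))
    · exact Or.inr (Or.inr (Or.inr hI))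
  have : (1:ℝ≥0∞) ≤ 0 := by
    calc (1:ℝ≥0∞) = M univ := by simp
      _ ≤ M (Nb f true x) + (M (Nb f false x) + (M {t | ¬ f x t = f t x} + M (Icc (0:ℝ) 1)ᶜ)) :=
        le_trans (measure_mono hcover) (le_trans (measure_union_le _ _)
          (by gcongr <;> exact le_trans (measure_union_le _ _) (by gcongr; exact measure_union_le _ _)))
      _ = 0 := by rw [hMA, hMB, hsymnull, hIccc]; simp
  simp at this

lemma symmetrizeC (f : ℝ → ℝ → Bool) (hf : Measurable (Function.uncurry f))
    (hsymm : ∀ᵐ p ∂V2, f p.1 p.2 = f p.2 p.1) :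
    ∃ g : ℝ → ℝ → Bool, Measurable (Function.uncurry g) ∧ (∀ x y, g x y = g y x) ∧
      (∀ᵐ p ∂V2, g p.1 p.2 = f p.1 p.2) := by
  classical
  refine ⟨fun x y => if x ≤ y then f x y else f y x, ?_, ?_, ?_⟩
  · have : Function.uncurry (fun x y => if x ≤ y then f x y else f y x) =
        fun p : ℝ × ℝ => if p.1 ≤ p.2 then Function.uncurry f p
          else Function.uncurry f p.swap := by
      funext p; rfl
    rw [this]
    exact Measurable.ite (measurableSet_le measurable_fst measurable_snd) hf
      (hf.comp measurable_swap)
  · intro x y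
    by_cases h1 : x ≤ y <;> by_cases h2 : y ≤ x
    · have : x = y := le_antisymm h1 h2
      subst this; rfl
    · simp [h1, h2]
    · simp [h1, h2]
    · exact absurd (le_of_not_ge h1) h2
  · filter_upwards [hsymm] with p hs
    by_cases h : p.1 ≤ p.2
    · simp [h]
    · simp [h, hs]


/-! ### Pattern set logic -/

lemma inP_move {P : Set (Bool × Bool × Bool)}
    (hP : ∀ a b c : Bool, (a, b, c) ∈ P → (b, a, c) ∈ P ∧ (a, c, b) ∈ P)
    {p q r p' q' r' : Bool} (hc : cntb true p q r = cntb true p' q' r')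
    (hm : (p, q, r) ∈ P) : (p', q', r') ∈ P := by
  have t12 : ∀ a b c : Bool, (a,b,c) ∈ P → (b,a,c) ∈ P := fun a b c h => (hP a b c h).1
  have t23 : ∀ a b c : Bool, (a,b,c) ∈ P → (a,c,b) ∈ P := fun a b c h => (hP a b c h).2
  revert hc hm
  rcases p <;> rcases q <;> rcases r <;> rcases p' <;> rcases q' <;> rcases r' <;>
    intro hc hm <;>
    first
      | exact hm
      | exact absurd hc (by decide)
      | solve_by_elim [t12, t23]

lemma cases_cnt (u v w : Bool) :
    cntb true u v w = 0 ∨ cntb true u v w = 1 ∨ cntb true u v w = 2 ∨ cntb true u v w = 3 := by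
  rcases u <;> rcases v <;> rcases w <;> decide

lemma cntb_flip (u v w : Bool) : cntb false u v w = 3 - cntb true u v w := by
  rcases u <;> rcases v <;> rcases w <;> decide

end

end Stmt12

open MeasureTheory Set Filter Stmt12

/-- Induced pattern-avoidance removal lemma for graphons: if an a.e. symmetric
`{0,1}`-valued kernel avoids a permutation-closed pattern set `P` on almost
all triples, it can be corrected on a null set to a symmetric kernel avoiding
`P` on all triples of pairwise distinct points. -/
theorem stmt12 (f : ℝ → ℝ → Bool)
    (hf : Measurable (Function.uncurry f))
    (P : Set (Bool × Bool × Bool))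
    (hP : ∀ a b c : Bool, (a, b, c) ∈ P → (b, a, c) ∈ P ∧ (a, c, b) ∈ P)
    (hsymm : ∀ᵐ p ∂((volume.restrict (Set.Icc (0:ℝ) 1)).prod
        (volume.restrict (Set.Icc (0:ℝ) 1))), f p.1 p.2 = f p.2 p.1)
    (hae : ∀ᵐ z ∂(Measure.pi fun _ : Fin 3 => volume.restrict (Set.Icc (0:ℝ) 1)),
      (f (z 0) (z 1), f (z 1) (z 2), f (z 0) (z 2)) ∉ P) :
    ∃ g : ℝ → ℝ → Bool,
      Measurable (Function.uncurry g) ∧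
      (∀ x y, g x y = g y x) ∧
      (∀ᵐ p ∂((volume.restrict (Set.Icc (0:ℝ) 1)).prod
          (volume.restrict (Set.Icc (0:ℝ) 1))), g p.1 p.2 = f p.1 p.2) ∧
      (∀ x ∈ Set.Icc (0:ℝ) 1, ∀ y ∈ Set.Icc (0:ℝ) 1, ∀ z ∈ Set.Icc (0:ℝ) 1,
        x ≠ y → y ≠ z → x ≠ z →
          (g x y, g y z, g x z) ∉ P) := by
  classical
  have hsymm' : ∀ᵐ p ∂V2, f p.1 p.2 = f p.2 p.1 := hsymm
  have haeS : ∀ᵐ p ∂V2, ∀ᵐ z ∂M, (f p.1 p.2, f p.2 z, f p.1 z) ∉ P :=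
    ae_pair_std (Q := fun x y z => (f x y, f y z, f x z) ∉ P) hae
  have haeR : ∀ᵐ p ∂V2, ∀ᵐ t ∂M, (f p.1 t, f t p.2, f p.1 p.2) ∉ P :=
    ae_pair_mid (Q := fun x y z => (f x y, f y z, f x z) ∉ P) hae
  have haeI : ∀ᵐ x ∂M, ∀ᵐ y ∂M, ∀ᵐ z ∂M, (f x y, f y z, f x z) ∉ P :=
    Measure.ae_ae_of_ae_prod haeS
  by_cases hs0 : ((false, false, false) : Bool × Bool × Bool) ∈ P <;>
    by_cases hs3 : ((true, true, true) : Bool × Bool × Bool) ∈ P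
  · -- hs0 ∧ hs3 : impossible
    exfalso
    have h3 : ∀ᵐ x ∂M, ∀ᵐ y ∂M, ∀ᵐ z ∂M, ¬(f x y = true ∧ f y z = true ∧ f x z = true) :=
      mono3 haeI fun x y z h hc => by
        rw [hc.1, hc.2.1, hc.2.2] at h; exact h hs3
    have h0 : ∀ᵐ x ∂M, ∀ᵐ y ∂M, ∀ᵐ z ∂M, ¬(f x y = false ∧ f y z = false ∧ f x z = false) :=
      mono3 haeI fun x y z h hc => by
        rw [hc.1, hc.2.1, hc.2.2] at h; exact h hs0
    exact LC f hf hsymm' h3 h0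
  · -- hs0, ¬hs3
    by_cases hs1 : ((true, false, false) : Bool × Bool × Bool) ∈ P
    · -- LA with b = false : f ≡ true a.e.
      have hpoint : ∀ u v w : Bool, (u, v, w) ∉ P → cntb false u v w < 2 := by
        intro u v w h
        by_contra hc
        push_neg at hc
        rcases u <;> rcases v <;> rcases w <;>
          first
            | exact absurd hc (by decide)
            | exact h (inP_move hP (by decide) hs0)
            | exact h (inP_move hP (by decide) hs1)
      have hae2 : ∀ᵐ x ∂M, ∀ᵐ y ∂M, ∀ᵐ z ∂M, cntb false (f x y) (f y z) (f x z) < 2 :=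
        mono3 haeI fun x y z h => hpoint _ _ _ h
      have hLA := LA f false hf hsymm' hae2
      refine ⟨fun _ _ => true, measurable_const, fun x y => rfl, ?_, ?_⟩
      · filter_upwards [hLA] with p hp
        exact hp.symm
      · intro x _ y _ z _ _ _ _ hmem
        exact hs3 hmem
    · by_cases hs2 : ((true, true, false) : Bool × Bool × Bool) ∈ P
      · -- parity with b = true
        have hpoint : ∀ u v w : Bool, (u, v, w) ∉ P →
            cntb true u v w ≠ 0 ∧ cntb true u v w ≠ 2 := by
          intro u v w h
          constructor
          · intro hc
            refine h (inP_move hP ?_ hs0)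
            revert hc; rcases u <;> rcases v <;> rcases w <;> decide
          · intro hc
            refine h (inP_move hP ?_ hs2)
            revert hc; rcases u <;> rcases v <;> rcases w <;> decide
        have hodd : ∀ᵐ x ∂M, ∀ᵐ y ∂M, ∀ᵐ z ∂M,
            cntb true (f x y) (f y z) (f x z) ≠ 0 ∧
            cntb true (f x y) (f y z) (f x z) ≠ 2 :=
          mono3 haeI fun x y z h => hpoint _ _ _ h
        obtain ⟨g, hg1, hg2, hg3, hg4⟩ := parityC f true hf hodd
        refine ⟨g, hg1, hg2, hg3, ?_⟩
        intro x _ y _ z _ _ _ _ hmem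
        have hprop := hg4 x y z
        rcases cases_cnt (g x y) (g y z) (g x z) with hc | hc | hc | hc
        · exact hprop.1 hc
        · exact hs1 (inP_move hP (by rw [hc]; decide) hmem)
        · exact hprop.2 hc
        · exact hs3 (inP_move hP (by rw [hc]; decide) hmem)
      · -- triangle-free with b = false
        have hpoint : ∀ u v w : Bool, (u, v, w) ∉ P → cntb false u v w ≠ 3 := by
          intro u v w h hc
          refine h (inP_move hP ?_ hs0)
          revert hc; rcases u <;> rcases v <;> rcases w <;> decide
        have haeT : ∀ᵐ p ∂V2, ∀ᵐ z ∂M,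
            cntb false (f p.1 p.2) (f p.2 z) (f p.1 z) ≠ 3 := by
          filter_upwards [haeS] with p hp
          filter_upwards [hp] with z hz
          exact hpoint _ _ _ hz
        obtain ⟨g, hg1, hg2, hg3, hg4⟩ := triangleC f false hf hsymm' haeT
        refine ⟨g, hg1, hg2, hg3, ?_⟩
        intro x _ y _ z _ _ _ _ hmem
        have hprop := hg4 x y z
        rcases cases_cnt (g x y) (g y z) (g x z) with hc | hc | hc | hc
        · exact hprop (by rw [cntb_flip, hc])
        · exact hs1 (inP_move hP (by rw [hc]; decide) hmem)
        · exact hs2 (inP_move hP (by rw [hc]; decide) hmem)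
        · exact hs3 (inP_move hP (by rw [hc]; decide) hmem)
  · -- ¬hs0, hs3
    by_cases hs2 : ((true, true, false) : Bool × Bool × Bool) ∈ P
    · -- LA with b = true : f ≡ false a.e.
      have hpoint : ∀ u v w : Bool, (u, v, w) ∉ P → cntb true u v w < 2 := by
        intro u v w h
        by_contra hc
        push_neg at hc
        rcases u <;> rcases v <;> rcases w <;>
          first
            | exact absurd hc (by decide)
            | exact h (inP_move hP (by decide) hs2)
            | exact h (inP_move hP (by decide) hs3)
      have hae2 : ∀ᵐ x ∂M, ∀ᵐ y ∂M, ∀ᵐ z ∂M, cntb true (f x y) (f y z) (f x z) < 2 :=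
        mono3 haeI fun x y z h => hpoint _ _ _ h
      have hLA := LA f true hf hsymm' hae2
      refine ⟨fun _ _ => false, measurable_const, fun x y => rfl, ?_, ?_⟩
      · filter_upwards [hLA] with p hp
        exact hp.symm
      · intro x _ y _ z _ _ _ _ hmem
        exact hs0 hmem
    · by_cases hs1 : ((true, false, false) : Bool × Bool × Bool) ∈ P
      · -- parity with b = false
        have hpoint : ∀ u v w : Bool, (u, v, w) ∉ P →
            cntb false u v w ≠ 0 ∧ cntb false u v w ≠ 2 := by
          intro u v w h
          constructor
          · intro hc
            refine h (inP_move hP ?_ hs3)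
            revert hc; rcases u <;> rcases v <;> rcases w <;> decide
          · intro hc
            refine h (inP_move hP ?_ hs1)
            revert hc; rcases u <;> rcases v <;> rcases w <;> decide
        have hodd : ∀ᵐ x ∂M, ∀ᵐ y ∂M, ∀ᵐ z ∂M,
            cntb false (f x y) (f y z) (f x z) ≠ 0 ∧
            cntb false (f x y) (f y z) (f x z) ≠ 2 :=
          mono3 haeI fun x y z h => hpoint _ _ _ h
        obtain ⟨g, hg1, hg2, hg3, hg4⟩ := parityC f false hf hodd
        refine ⟨g, hg1, hg2, hg3, ?_⟩
        intro x _ y _ z _ _ _ _ hmem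
        have hprop := hg4 x y z
        rcases cases_cnt (g x y) (g y z) (g x z) with hc | hc | hc | hc
        · exact hs0 (inP_move hP (by rw [hc]; decide) hmem)
        · exact hprop.2 (by rw [cntb_flip, hc])
        · exact hs2 (inP_move hP (by rw [hc]; decide) hmem)
        · exact hprop.1 (by rw [cntb_flip, hc])
      · -- triangle-free with b = true
        have hpoint : ∀ u v w : Bool, (u, v, w) ∉ P → cntb true u v w ≠ 3 := by
          intro u v w h hc
          refine h (inP_move hP ?_ hs3)
          revert hc; rcases u <;> rcases v <;> rcases w <;> decide
        have haeT : ∀ᵐ p ∂V2, ∀ᵐ z ∂M,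
            cntb true (f p.1 p.2) (f p.2 z) (f p.1 z) ≠ 3 := by
          filter_upwards [haeS] with p hp
          filter_upwards [hp] with z hz
          exact hpoint _ _ _ hz
        obtain ⟨g, hg1, hg2, hg3, hg4⟩ := triangleC f true hf hsymm' haeT
        refine ⟨g, hg1, hg2, hg3, ?_⟩
        intro x _ y _ z _ _ _ _ hmem
        have hprop := hg4 x y z
        rcases cases_cnt (g x y) (g y z) (g x z) with hc | hc | hc | hc
        · exact hs0 (inP_move hP (by rw [hc]; decide) hmem)
        · exact hs1 (inP_move hP (by rw [hc]; decide) hmem)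
        · exact hs2 (inP_move hP (by rw [hc]; decide) hmem)
        · exact hprop hc
  · -- ¬hs0, ¬hs3
    by_cases hs1 : ((true, false, false) : Bool × Bool × Bool) ∈ P <;>
      by_cases hs2 : ((true, true, false) : Bool × Bool × Bool) ∈ P
    · -- constant a.e.
      have hpoint : ∀ u v w : Bool, (u, v, w) ∉ P → u = v ∧ v = w := by
        intro u v w h
        rcases u <;> rcases v <;> rcases w <;>
          first
            | exact ⟨rfl, rfl⟩
            | exact absurd (inP_move hP (by decide) hs1) h
            | exact absurd (inP_move hP (by decide) hs2) h
      have heq : ∀ᵐ x ∂M, ∀ᵐ y ∂M, ∀ᵐ z ∂M, f x y = f y z ∧ f y z = f x z :=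
        mono3 haeI fun x y z h => hpoint _ _ _ h
      rcases LB f hf heq with hF | hT
      · refine ⟨fun _ _ => false, measurable_const, fun x y => rfl, ?_, ?_⟩
        · filter_upwards [hF] with p hp
          exact hp.symm
        · intro x _ y _ z _ _ _ _ hmem
          exact hs0 hmem
      · refine ⟨fun _ _ => true, measurable_const, fun x y => rfl, ?_, ?_⟩
        · filter_upwards [hT] with p hp
          exact hp.symm
        · intro x _ y _ z _ _ _ _ hmem
          exact hs3 hmem
    · -- cluster with b = false
      have hpoint : ∀ u v w : Bool, (u, v, w) ∉ P → cntb false u v w ≠ 2 := by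
        intro u v w h hc
        refine h (inP_move hP ?_ hs1)
        revert hc; rcases u <;> rcases v <;> rcases w <;> decide
      have haeA : ∀ᵐ p ∂V2, ∀ᵐ z ∂M,
          cntb false (f p.1 p.2) (f p.2 z) (f p.1 z) ≠ 2 := by
        filter_upwards [haeS] with p hp
        filter_upwards [hp] with z hz
        exact hpoint _ _ _ hz
      have haeB : ∀ᵐ p ∂V2, ∀ᵐ t ∂M,
          cntb false (f p.1 t) (f t p.2) (f p.1 p.2) ≠ 2 := by
        filter_upwards [haeR] with p hp
        filter_upwards [hp] with t ht
        exact hpoint _ _ _ ht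
      obtain ⟨g, hg1, hg2, hg3, hg4⟩ := clusterC f false hf hsymm' haeA haeB
      refine ⟨g, hg1, hg2, hg3, ?_⟩
      intro x _ y _ z _ _ _ _ hmem
      have hprop := hg4 x y z
      rcases cases_cnt (g x y) (g y z) (g x z) with hc | hc | hc | hc
      · exact hs0 (inP_move hP (by rw [hc]; decide) hmem)
      · exact hprop (by rw [cntb_flip, hc])
      · exact hs2 (inP_move hP (by rw [hc]; decide) hmem)
      · exact hs3 (inP_move hP (by rw [hc]; decide) hmem)
    · -- cluster with b = true
      have hpoint : ∀ u v w : Bool, (u, v, w) ∉ P → cntb true u v w ≠ 2 := by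
        intro u v w h hc
        refine h (inP_move hP ?_ hs2)
        revert hc; rcases u <;> rcases v <;> rcases w <;> decide
      have haeA : ∀ᵐ p ∂V2, ∀ᵐ z ∂M,
          cntb true (f p.1 p.2) (f p.2 z) (f p.1 z) ≠ 2 := by
        filter_upwards [haeS] with p hp
        filter_upwards [hp] with z hz
        exact hpoint _ _ _ hz
      have haeB : ∀ᵐ p ∂V2, ∀ᵐ t ∂M,
          cntb true (f p.1 t) (f t p.2) (f p.1 p.2) ≠ 2 := by
        filter_upwards [haeR] with p hp
        filter_upwards [hp] with t ht
        exact hpoint _ _ _ ht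
      obtain ⟨g, hg1, hg2, hg3, hg4⟩ := clusterC f true hf hsymm' haeA haeB
      refine ⟨g, hg1, hg2, hg3, ?_⟩
      intro x _ y _ z _ _ _ _ hmem
      have hprop := hg4 x y z
      rcases cases_cnt (g x y) (g y z) (g x z) with hc | hc | hc | hc
      · exact hs0 (inP_move hP (by rw [hc]; decide) hmem)
      · exact hs1 (inP_move hP (by rw [hc]; decide) hmem)
      · exact hprop hc
      · exact hs3 (inP_move hP (by rw [hc]; decide) hmem)
    · -- no constraint at all
      obtain ⟨g, hg1, hg2, hg3⟩ := symmetrizeC f hf hsymm'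
      refine ⟨g, hg1, hg2, hg3, ?_⟩
      intro x _ y _ z _ _ _ _ hmem
      rcases cases_cnt (g x y) (g y z) (g x z) with hc | hc | hc | hc
      · exact hs0 (inP_move hP (by rw [hc]; decide) hmem)
      · exact hs1 (inP_move hP (by rw [hc]; decide) hmem)
      · exact hs2 (inP_move hP (by rw [hc]; decide) hmem)
      · exact hs3 (inP_move hP (by rw [hc]; decide) hmem)
end

section
/- Let f : [0,1]³ → {0,1} be measurable and symmetric almost everywhere (invariant under all permutations of its three arguments for almost all triples), and suppose f(y₁,y₂,y₃)·f(y₁,y₂,y₄)·f(y₁,y₃,y₄)·f(y₂,y₃,y₄) = 0 for almost all (y₁,y₂,y₃,y₄) ∈ [0,1]⁴. Then there exists a symmetric measurable g : [0,1]³ → {0,1}, equal to f almost everywhere, such that g(y₁,y₂,y₃)·g(y₁,y₂,y₄)·g(y₁,y₃,y₄)·g(y₂,y₃,y₄) = 0 for ALL pairwise distinct y₁,y₂,y₃,y₄ ∈ [0,1]. -/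
open MeasureTheory Set Metric Filter Topology ENNReal

/-! Let `A = [0,1]³ ∩ {f = 1}` and let `g` be the indicator of the points around which `A` fills
99% of every small cube. By Lebesgue's density theorem `g = f` almost everywhere on `[0,1]³`, and
since coordinate permutations are measure-preserving isometries of the sup metric under which `A`
is a.e. invariant, `g` is symmetric everywhere. Suppose the four faces of some `y ∈ [0,1]⁴` were
all such points and take a small `ε`. In the cube of radius `ε` around `y`, the quadruples whose
`j`-th face lies outside `A` have measure at most `2ε · (2ε)³ / 100`, while the part of that cube
inside `[0,1]⁴` has measure at least `ε⁴`. As `4 · 2⁴ < 100`, a set of positive measure of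
quadruples would have all four faces in `A`, against the hypothesis on `f`. -/

theorem exists_pos_rat_forall_of_eventually_nhdsGT {p : ℝ → Prop} (h : ∀ᶠ r in 𝓝[>] 0, p r) :
    ∃ q : ℚ, 0 < q ∧ ∀ r : ℚ, 0 < r → (r : ℝ) ≤ q → p r := by
  obtain ⟨δ, hδ, hsub⟩ := mem_nhdsGT_iff_exists_Ioc_subset.1 h
  obtain ⟨q, hq0, hqδ⟩ := exists_rat_btwn (mem_Ioi.1 hδ)
  exact ⟨q, mod_cast hq0, fun r hr hrq => hsub ⟨mod_cast hr, hrq.trans hqδ.le⟩⟩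

section ThickPoint

variable {X : Type*} [PseudoMetricSpace X] [MeasureSpace X]

/-- Rational radii make `{w | IsThickPoint s w}` measurable. -/
def IsThickPoint (s : Set X) (w : X) : Prop :=
  ∃ q : ℚ, 0 < q ∧ ∀ r : ℚ, 0 < r → (r : ℝ) ≤ q →
    100 * volume (sᶜ ∩ closedBall w r) ≤ volume (closedBall w r)

theorem measurable_measure_inter_closedBall [OpensMeasurableSpace X] [SecondCountableTopology X]
    [SFinite (volume : Measure X)] {t : Set X} (ht : MeasurableSet t) (r : ℝ) :
    Measurable fun w : X => volume (t ∩ closedBall w r) := by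
  have hS : MeasurableSet {p : X × X | p.2 ∈ t ∧ dist p.2 p.1 ≤ r} :=
    (ht.preimage measurable_snd).inter
      (measurableSet_le (measurable_snd.dist measurable_fst) measurable_const)
  exact measurable_measure_prodMk_left hS

theorem measurableSet_setOf_isThickPoint [OpensMeasurableSpace X] [SecondCountableTopology X]
    [SFinite (volume : Measure X)] {s : Set X} (hs : MeasurableSet s) :
    MeasurableSet {w | IsThickPoint s w} := by
  refine measurableSet_setOfPred.2 <| Measurable.exists fun q => measurable_const.and <|
    Measurable.forall fun r => measurable_const.imp <| measurable_const.imp ?_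
  exact measurableSet_setOfPred.1 <| measurableSet_le
    ((measurable_measure_inter_closedBall hs.compl _).const_mul _)
    (by simpa using measurable_measure_inter_closedBall MeasurableSet.univ _)

theorem isThickPoint_apply_iff {e : X ≃ᵐ X} (he : MeasurePreserving e) (he' : Isometry e)
    {s : Set X} (hs : e ⁻¹' s =ᵐ[volume] s) (w : X) :
    IsThickPoint s (e w) ↔ IsThickPoint s w := by
  have hball (r : ℝ) (t : Set X) :
      volume (t ∩ closedBall (e w) r) = volume (e ⁻¹' t ∩ closedBall w r) := by
    rw [← he.measure_preimage_equiv, preimage_inter, he'.preimage_closedBall]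
  have hcompl (r : ℝ) : volume (sᶜ ∩ closedBall (e w) r) = volume (sᶜ ∩ closedBall w r) := by
    rw [hball, preimage_compl]
    exact measure_congr (hs.compl.inter (EventuallyEq.refl _ _))
  have hvol (r : ℝ) : volume (closedBall (e w) r) = volume (closedBall w r) := by
    simpa using hball r univ
  simp only [IsThickPoint, hcompl, hvol]

theorem eventually_measure_closedBall_lt_top {μ : Measure X} [IsLocallyFiniteMeasure μ] (w : X) :
    ∀ᶠ r in 𝓝 0, μ (closedBall w r) < ∞ := by
  obtain ⟨U, hU, hUfin⟩ := μ.finiteAt_nhds w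
  obtain ⟨ε, hε, hball⟩ := Metric.mem_nhds_iff.1 hU
  filter_upwards [Iio_mem_nhds hε] with r hr
  exact (measure_mono ((closedBall_subset_ball hr).trans hball)).trans_lt hUfin

theorem isThickPoint_of_tendsto_zero [IsLocallyFiniteMeasure (volume : Measure X)]
    {s : Set X} {w : X}
    (h : Tendsto (fun r => volume (sᶜ ∩ closedBall w r) / volume (closedBall w r)) (𝓝[>] 0)
      (𝓝 0)) :
    IsThickPoint s w := by
  refine exists_pos_rat_forall_of_eventually_nhdsGT (p := fun r : ℝ =>
    100 * volume (sᶜ ∩ closedBall w r) ≤ volume (closedBall w r)) ?_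
  filter_upwards [h.eventually_lt_const (by norm_num : (0 : ℝ≥0∞) < 100⁻¹),
    nhdsWithin_le_nhds (eventually_measure_closedBall_lt_top (μ := volume) w)] with r hr hfin
  calc 100 * volume (sᶜ ∩ closedBall w r)
      ≤ 100 * (100⁻¹ * volume (closedBall w r)) := by
        gcongr
        exact (ENNReal.div_le_iff_le_mul (Or.inr (by norm_num)) (Or.inl hfin.ne)).1 hr.le
    _ = volume (closedBall w r) := ENNReal.mul_inv_cancel_left (by norm_num) (by norm_num)

theorem not_isThickPoint_of_tendsto_one {s : Set X} {w : X}
    (h : Tendsto (fun r => volume (sᶜ ∩ closedBall w r) / volume (closedBall w r)) (𝓝[>] 0)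
      (𝓝 1)) :
    ¬ IsThickPoint s w := by
  rintro ⟨q, hq, hthick⟩
  obtain ⟨q', hq', hlt⟩ := exists_pos_rat_forall_of_eventually_nhdsGT
    (h.eventually_const_lt (by norm_num : (100⁻¹ : ℝ≥0∞) < 1))
  set r : ℚ := min q q'
  have hr : 0 < r := lt_min hq hq'
  have hlt' := (ENNReal.lt_div_iff_mul_lt (Or.inr (by norm_num)) (Or.inr (by norm_num))).1
    (hlt r hr (mod_cast min_le_right q q'))
  refine lt_irrefl (volume (closedBall w r)) ?_
  calc volume (closedBall w r)
      = 100 * (100⁻¹ * volume (closedBall w r)) :=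
        (ENNReal.mul_inv_cancel_left (by norm_num) (by norm_num)).symm
    _ < 100 * volume (sᶜ ∩ closedBall w r) :=
        ENNReal.mul_lt_mul_right (by norm_num) (by norm_num) hlt'
    _ ≤ volume (closedBall w r) := hthick r hr (mod_cast min_le_left q q')

end ThickPoint

theorem ae_isThickPoint_iff_mem {X : Type*} [MetricSpace X] [MeasureSpace X] [BorelSpace X]
    [SecondCountableTopology X] [HasBesicovitchCovering X]
    [IsLocallyFiniteMeasure (volume : Measure X)] {s : Set X} (hs : MeasurableSet s) :
    ∀ᵐ w, IsThickPoint s w ↔ w ∈ s := by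
  filter_upwards [Besicovitch.ae_tendsto_measure_inter_div_of_measurableSet volume hs.compl]
    with w hw
  by_cases hws : w ∈ s
  · rw [indicator_of_notMem (not_not.2 hws)] at hw
    exact iff_of_true (isThickPoint_of_tendsto_zero hw) hws
  · rw [indicator_of_mem hws] at hw
    exact iff_of_false (not_isThickPoint_of_tendsto_one hw) hws

abbrev unitCube (ι : Type*) : Set (ι → ℝ) := univ.pi fun _ => Icc 0 1

theorem measurableSet_unitCube (ι : Type*) [Countable ι] : MeasurableSet (unitCube ι) :=
  MeasurableSet.univ_pi fun _ => measurableSet_Icc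

theorem volume_restrict_unitCube (ι : Type*) [Fintype ι] :
    volume.restrict (unitCube ι) = Measure.pi fun _ => volume.restrict (Icc (0 : ℝ) 1) := by
  rw [volume_pi, Measure.restrict_pi_pi]

theorem ofReal_le_volume_restrict_Icc_closedBall {x ε : ℝ} (hx : x ∈ Icc (0 : ℝ) 1)
    (hε : 0 ≤ ε) (hε1 : ε ≤ 1) :
    ENNReal.ofReal ε ≤ volume.restrict (Icc (0 : ℝ) 1) (closedBall x ε) := by
  rw [Measure.restrict_apply measurableSet_closedBall, Real.closedBall_eq_Icc, Icc_inter_Icc,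
    Real.volume_Icc]
  refine ENNReal.ofReal_le_ofReal ?_
  have h1 : max (x - ε) 0 ≤ x := max_le (by linarith) hx.1
  have h2 : max (x - ε) 0 ≤ 1 - ε := max_le (by linarith [hx.2]) (by linarith)
  rw [le_sub_iff_add_le, le_min_iff]
  constructor <;> linarith

theorem ofReal_pow_le_volume_restrict_unitCube_closedBall {ι : Type*} [Fintype ι] {y : ι → ℝ}
    (hy : y ∈ unitCube ι) {ε : ℝ} (hε : 0 ≤ ε) (hε1 : ε ≤ 1) :
    ENNReal.ofReal ε ^ Fintype.card ι ≤ volume.restrict (unitCube ι) (closedBall y ε) := by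
  rw [volume_restrict_unitCube, closedBall_pi _ hε, Measure.pi_pi, ← Finset.card_univ,
    ← Finset.prod_const]
  exact Finset.prod_le_prod' fun i _ =>
    ofReal_le_volume_restrict_Icc_closedBall (hy i trivial) hε hε1

theorem volume_closedBall_inter_comp_succAbove_mem_le {n : ℕ} (t : Set (Fin n → ℝ))
    (j : Fin (n + 1)) (y : Fin (n + 1) → ℝ) {r : ℝ} (hr : 0 ≤ r) :
    volume (closedBall y r ∩ {y' | y' ∘ j.succAbove ∈ t}) ≤
      ENNReal.ofReal (2 * r) * volume (t ∩ closedBall (y ∘ j.succAbove) r) := by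
  set e := MeasurableEquiv.piFinSuccAbove (fun _ : Fin (n + 1) => ℝ) j
  have hsub : closedBall y r ∩ {y' | y' ∘ j.succAbove ∈ t} ⊆
      e ⁻¹' (closedBall (y j) r ×ˢ (t ∩ closedBall (y ∘ j.succAbove) r)) := by
    rintro y' ⟨hy', hy't⟩
    refine ⟨(dist_le_pi_dist y' y j).trans hy', hy't, ?_⟩
    exact (dist_pi_le_iff hr).2 fun i => (dist_le_pi_dist y' y _).trans hy'
  calc volume (closedBall y r ∩ {y' | y' ∘ j.succAbove ∈ t})
      ≤ volume (e ⁻¹' (closedBall (y j) r ×ˢ (t ∩ closedBall (y ∘ j.succAbove) r))) :=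
        measure_mono hsub
    _ = ENNReal.ofReal (2 * r) * volume (t ∩ closedBall (y ∘ j.succAbove) r) := by
      rw [(volume_preserving_piFinSuccAbove (fun _ => ℝ) j).measure_preimage_equiv,
        Measure.volume_eq_prod, Measure.prod_prod, Real.volume_closedBall]

theorem mul_volume_closedBall_inter_comp_succAbove_compl_le {n : ℕ} {s : Set (Fin n → ℝ)}
    (j : Fin (n + 1)) (y : Fin (n + 1) → ℝ) {r : ℝ} (hr : 0 ≤ r)
    (hthick : 100 * volume (sᶜ ∩ closedBall (y ∘ j.succAbove) r) ≤
      volume (closedBall (y ∘ j.succAbove) r)) :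
    100 * volume (closedBall y r ∩ {y' | y' ∘ j.succAbove ∈ sᶜ}) ≤
      ENNReal.ofReal (2 * r) ^ (n + 1) :=
  calc 100 * volume (closedBall y r ∩ {y' | y' ∘ j.succAbove ∈ sᶜ})
      ≤ 100 * (ENNReal.ofReal (2 * r) * volume (sᶜ ∩ closedBall (y ∘ j.succAbove) r)) := by
        gcongr
        exact volume_closedBall_inter_comp_succAbove_mem_le _ j y hr
    _ = ENNReal.ofReal (2 * r) * (100 * volume (sᶜ ∩ closedBall (y ∘ j.succAbove) r)) := by
        ring
    _ ≤ ENNReal.ofReal (2 * r) * volume (closedBall (y ∘ j.succAbove) r) := by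
        gcongr
    _ = ENNReal.ofReal (2 * r) ^ (n + 1) := by
        rw [Real.volume_pi_closedBall _ hr, Fintype.card_fin, ENNReal.ofReal_pow (by positivity),
          pow_succ']

/-- Near a `y` whose faces are all thick, the points with a face outside `s` fill at most
`(n + 1) 2 ^ (n + 1) / 100` of a small box. -/
theorem exists_not_isThickPoint_comp_succAbove {n : ℕ} (hn : (n + 1) * 2 ^ (n + 1) < 100)
    {s : Set (Fin n → ℝ)}
    (h : ∀ᵐ y ∂volume.restrict (unitCube (Fin (n + 1))), ∃ j : Fin (n + 1), y ∘ j.succAbove ∉ s)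
    {y : Fin (n + 1) → ℝ} (hy : y ∈ unitCube (Fin (n + 1))) :
    ∃ j : Fin (n + 1), ¬ IsThickPoint s (y ∘ j.succAbove) := by
  by_contra! hthick
  choose q hq hqthick using hthick
  obtain ⟨ε, hε, hε1, hεq⟩ : ∃ ε : ℚ, 0 < ε ∧ ε ≤ 1 ∧ ∀ j, ε ≤ q j :=
    ⟨min 1 (Finset.univ.inf' Finset.univ_nonempty q),
      lt_min one_pos ((Finset.lt_inf'_iff _).2 fun j _ => hq j), min_le_left _ _,
      fun j => (min_le_right _ _).trans (Finset.inf'_le _ (Finset.mem_univ j))⟩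
  set μ := volume.restrict (unitCube (Fin (n + 1)))
  set B := closedBall y (ε : ℝ)
  have hε0 : (0 : ℝ) ≤ ε := mod_cast hε.le
  have hcover : μ B ≤ ∑ j : Fin (n + 1), μ (B ∩ {y' | y' ∘ j.succAbove ∈ sᶜ}) := by
    refine (measure_mono_ae ?_).trans (measure_iUnion_fintype_le μ _)
    filter_upwards [h] with y' ⟨j, hj⟩ hy'
    exact mem_iUnion.2 ⟨j, hy', hj⟩
  have hvol : 100 * ENNReal.ofReal ε ^ (n + 1) ≤
      ((n + 1) * 2 ^ (n + 1) : ℕ) * ENNReal.ofReal ε ^ (n + 1) :=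
    calc 100 * ENNReal.ofReal ε ^ (n + 1) ≤ 100 * μ B := by
          gcongr
          have hbox := ofReal_pow_le_volume_restrict_unitCube_closedBall hy hε0 (mod_cast hε1)
          rwa [Fintype.card_fin] at hbox
      _ ≤ ∑ j : Fin (n + 1), 100 * μ (B ∩ {y' | y' ∘ j.succAbove ∈ sᶜ}) := by
          rw [← Finset.mul_sum]
          gcongr
      _ ≤ ∑ _j : Fin (n + 1), ENNReal.ofReal (2 * ε) ^ (n + 1) := by
          gcongr with j
          exact (mul_le_mul_right (Measure.restrict_apply_le _ _) _).trans
            (mul_volume_closedBall_inter_comp_succAbove_compl_le j y hε0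
              (hqthick j ε hε (mod_cast hεq j)))
      _ = ((n + 1) * 2 ^ (n + 1) : ℕ) * ENNReal.ofReal ε ^ (n + 1) := by
          rw [ENNReal.ofReal_mul zero_le_two, mul_pow]
          simp [mul_assoc]
  have hpos : ENNReal.ofReal ε ^ (n + 1) ≠ 0 := by simpa using hε
  have hcast := (ENNReal.mul_le_mul_iff_left hpos (by simp)).1 hvol
  exact hn.not_ge (mod_cast hcast)

section Permutations

variable {n : ℕ}

theorem preimage_comp_perm_unitCube (σ : Equiv.Perm (Fin n)) :
    (· ∘ σ) ⁻¹' unitCube (Fin n) = unitCube (Fin n) := by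
  ext z
  simp only [mem_preimage, mem_univ_pi, Function.comp_apply]
  exact σ.forall_congr_right (q := fun i => z i ∈ Icc 0 1)

theorem preimage_comp_perm_unitCube_inter_ae_eq {t : Set (Fin n → ℝ)} (σ : Equiv.Perm (Fin n))
    (h : ∀ᵐ z ∂volume.restrict (unitCube (Fin n)), z ∘ σ ∈ t ↔ z ∈ t) :
    (· ∘ σ) ⁻¹' (unitCube (Fin n) ∩ t) =ᵐ[volume] (unitCube (Fin n) ∩ t : Set _) := by
  rw [ae_restrict_iff' (measurableSet_unitCube _)] at h
  filter_upwards [h] with z hz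
  rw [preimage_inter, preimage_comp_perm_unitCube]
  exact propext ⟨fun h => ⟨h.1, (hz h.1).1 h.2⟩, fun h => ⟨h.1, (hz h.1).2 h.2⟩⟩

theorem isThickPoint_comp_perm_iff {s : Set (Fin n → ℝ)} {σ : Equiv.Perm (Fin n)}
    (hs : (· ∘ σ) ⁻¹' s =ᵐ[volume] s) (w : Fin n → ℝ) :
    IsThickPoint s (w ∘ σ) ↔ IsThickPoint s w := by
  have happly (u : Fin n → ℝ) : MeasurableEquiv.piCongrLeft (fun _ => ℝ) σ.symm u = u ∘ σ := by
    ext i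
    simp [MeasurableEquiv.coe_piCongrLeft, Equiv.piCongrLeft_apply]
  rw [← happly]
  refine isThickPoint_apply_iff (volume_measurePreserving_piCongrLeft _ _)
    (IsometryEquiv.piCongrLeft (Y := fun _ => ℝ) σ.symm).isometry ?_ w
  simpa only [← funext happly] using hs

end Permutations

theorem vec3_eta {α : Type*} (z : Fin 3 → α) : ![z 0, z 1, z 2] = z :=
  FinVec.etaExpand_eq z

theorem forall_fin_four_comp_succAbove {α : Type*} (y : Fin 4 → α) (P : (Fin 3 → α) → Prop) :
    (∀ j : Fin 4, P (y ∘ j.succAbove)) ↔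
      P ![y 0, y 1, y 2] ∧ P ![y 0, y 1, y 3] ∧ P ![y 0, y 2, y 3] ∧ P ![y 1, y 2, y 3] := by
  have h0 : y ∘ Fin.succAbove 0 = ![y 1, y 2, y 3] := by funext i; fin_cases i <;> rfl
  have h1 : y ∘ Fin.succAbove 1 = ![y 0, y 2, y 3] := by funext i; fin_cases i <;> rfl
  have h2 : y ∘ Fin.succAbove 2 = ![y 0, y 1, y 3] := by funext i; fin_cases i <;> rfl
  have h3 : y ∘ Fin.succAbove 3 = ![y 0, y 1, y 2] := by funext i; fin_cases i <;> rfl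
  refine ⟨fun h => ⟨h3 ▸ h 3, h2 ▸ h 2, h1 ▸ h 1, h0 ▸ h 0⟩, fun ⟨p3, p2, p1, p0⟩ j => ?_⟩
  fin_cases j
  exacts [h0 ▸ p0, h1 ▸ p1, h2 ▸ p2, h3 ▸ p3]

theorem mul_faces_eq_zero_iff {α M : Type*} [MulZeroClass M] [NoZeroDivisors M]
    (k : α → α → α → M) (y : Fin 4 → α) :
    k (y 0) (y 1) (y 2) * k (y 0) (y 1) (y 3) * k (y 0) (y 2) (y 3) * k (y 1) (y 2) (y 3) = 0 ↔
      ∃ j : Fin 4, k (y (j.succAbove 0)) (y (j.succAbove 1)) (y (j.succAbove 2)) = 0 := by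
  rw [← not_iff_not, not_exists]
  refine Iff.trans ?_ (forall_fin_four_comp_succAbove y fun w => k (w 0) (w 1) (w 2) ≠ 0).symm
  simp [and_assoc]

/-- Continuous tetrahedron removal lemma for 3-uniform hypergraphons: an a.e.
symmetric `{0,1}`-valued kernel on `[0,1]³` with almost no tetrahedra can be
corrected on a null set to a symmetric kernel with no tetrahedra on any four
pairwise distinct points. -/
theorem stmt17 (f : ℝ → ℝ → ℝ → ℝ)
    (hf : Measurable fun p : ℝ × ℝ × ℝ => f p.1 p.2.1 p.2.2)
    (hval : ∀ x y z, f x y z = 0 ∨ f x y z = 1)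
    (hsymm : ∀ π : Equiv.Perm (Fin 3),
      ∀ᵐ z ∂(Measure.pi fun _ : Fin 3 => volume.restrict (Set.Icc (0:ℝ) 1)),
        f (z 0) (z 1) (z 2) = f (z (π 0)) (z (π 1)) (z (π 2)))
    (hae : ∀ᵐ y ∂(Measure.pi fun _ : Fin 4 => volume.restrict (Set.Icc (0:ℝ) 1)),
      f (y 0) (y 1) (y 2) * f (y 0) (y 1) (y 3) * f (y 0) (y 2) (y 3) *
        f (y 1) (y 2) (y 3) = 0) :
    ∃ g : ℝ → ℝ → ℝ → ℝ,
      Measurable (fun p : ℝ × ℝ × ℝ => g p.1 p.2.1 p.2.2) ∧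
      (∀ x y z, g x y z = 0 ∨ g x y z = 1) ∧
      (∀ (z : Fin 3 → ℝ) (π : Equiv.Perm (Fin 3)),
        g (z 0) (z 1) (z 2) = g (z (π 0)) (z (π 1)) (z (π 2))) ∧
      (∀ᵐ z ∂(Measure.pi fun _ : Fin 3 => volume.restrict (Set.Icc (0:ℝ) 1)),
        g (z 0) (z 1) (z 2) = f (z 0) (z 1) (z 2)) ∧
      (∀ y : Fin 4 → ℝ, (∀ i, y i ∈ Set.Icc (0:ℝ) 1) → Function.Injective y →
        g (y 0) (y 1) (y 2) * g (y 0) (y 1) (y 3) * g (y 0) (y 2) (y 3) *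
          g (y 1) (y 2) (y 3) = 0) := by
  classical
  set A : Set (Fin 3 → ℝ) := unitCube (Fin 3) ∩ {w | f (w 0) (w 1) (w 2) = 1}
  have hA : MeasurableSet A := (measurableSet_unitCube _).inter
    ((hf.comp (by fun_prop : Measurable fun w : Fin 3 → ℝ => (w 0, w 1, w 2)))
      (measurableSet_singleton 1))
  rw [← volume_restrict_unitCube] at hsymm hae ⊢
  have hperm (σ : Equiv.Perm (Fin 3)) (w : Fin 3 → ℝ) :
      IsThickPoint A (w ∘ σ) ↔ IsThickPoint A w := by
    refine isThickPoint_comp_perm_iff (preimage_comp_perm_unitCube_inter_ae_eq σ ?_) w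
    filter_upwards [hsymm σ] with z hz
    simp only [Function.comp_apply, ← hz]
  let g : ℝ → ℝ → ℝ → ℝ := fun x y z => if IsThickPoint A ![x, y, z] then 1 else 0
  refine ⟨g, ?_, fun x y z => (ite_eq_or_eq _ _ _).symm, fun z π => ?_, ?_, ?_⟩
  · exact Measurable.ite ((measurableSet_setOf_isThickPoint hA).preimage (by fun_prop))
      measurable_const measurable_const
  · have hπ : ![z (π 0), z (π 1), z (π 2)] = z ∘ π := vec3_eta (z ∘ π)
    simp only [g, hπ, vec3_eta z, hperm]
  · filter_upwards [ae_restrict_of_ae (ae_isThickPoint_iff_mem hA),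
      ae_restrict_mem (measurableSet_unitCube _)] with z hz hzc
    simp only [g, vec3_eta z, hz, A, mem_inter_iff, hzc, true_and, mem_ofPred_eq]
    rcases hval (z 0) (z 1) (z 2) with h | h <;> simp [h]
  · intro y hy _
    have hfaces : ∀ᵐ y' ∂volume.restrict (unitCube (Fin 4)),
        ∃ j : Fin 4, y' ∘ j.succAbove ∉ A := by
      filter_upwards [hae] with y' hy'
      obtain ⟨j, hj⟩ := (mul_faces_eq_zero_iff f y').1 hy'
      exact ⟨j, fun hA => one_ne_zero (hA.2.symm.trans hj)⟩
    obtain ⟨j, hj⟩ := exists_not_isThickPoint_comp_succAbove (by norm_num) hfaces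
      (fun i _ => hy i)
    rw [← vec3_eta (y ∘ j.succAbove)] at hj
    exact (mul_faces_eq_zero_iff g y).2 ⟨j, if_neg hj⟩
end
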